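/- arXiv:2411.15890 — 12 statements merged into one kernel-verified Lean document; each statement's English description precedes it below -/
import Mathlib

section
/- Let G be a finite abelian group. If there exists an (r, s)-near-factorization of G, then there exists a symmetric (r, s)-near-factorization of G, i.e., one in which both sets are symmetric. -/
/-!
In the integral group ring, a near-factorization reads `A B = G - 1`. Since `G` is abelian,
`a⁻¹ b = a'⁻¹ b'` forces `a' b = a b'`, so the products `a⁻¹ b` are pairwise distinct as well and
`A⁻¹ B = G - z` for a single `z`. Multiplying `A⁻¹ B = (z A) B` by `A` and using
`X (G - 1) = |X| G - X` cancels `B`, whence `A⁻¹ = z A`. The element `z` is a square: if `|A|` is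
odd, the involution `a ↦ (z a)⁻¹` of `A` has a fixed point `a`, and `z = a⁻²`; otherwise
`|G| = |A| |B| + 1` is odd. Writing `z = t²`, the translate `(t A, t⁻¹ B)` is a near-factorization
with `t A` symmetric, and then `t⁻¹ B` is symmetric by the same cancellation.
-/

open Finset
open scoped Pointwise

/-- A pair `(A, B)` of subsets of a finite group `G` is an `(r, s)`-near-factorization of `G`
if `|A| = r`, `|B| = s`, `|A| * |B| = |G| - 1` and `A * B = G \ {e}`. -/
def IsRSNearFactorization {G : Type*} [Group G] [Fintype G] [DecidableEq G]
    (r s : ℕ) (A B : Finset G) : Prop :=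
  A.card = r ∧ B.card = s ∧ A.card * B.card = Fintype.card G - 1 ∧
    A * B = Finset.univ \ {1}

/-- A subset `A` of a group is symmetric if `g ∈ A ↔ g⁻¹ ∈ A` for every `g`. -/
def IsSymmetricSet {G : Type*} [Group G] [DecidableEq G] (A : Finset G) : Prop :=
  ∀ g : G, g ∈ A ↔ g⁻¹ ∈ A

namespace Finset

open MonoidAlgebra

section GroupRing

variable {G : Type*}

noncomputable def toGroupRing (s : Finset G) : MonoidAlgebra ℤ G := ∑ g ∈ s, single g 1

lemma coeff_toGroupRing [DecidableEq G] (s : Finset G) (g : G) :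
    (toGroupRing s).coeff g = if g ∈ s then 1 else 0 := by
  simp [toGroupRing, coeff_sum, coeff_single, Finsupp.single_apply]

lemma toGroupRing_injective [DecidableEq G] :
    Function.Injective (toGroupRing : Finset G → MonoidAlgebra ℤ G) := by
  intro s t h
  ext g
  have := congr_arg (fun x => x.coeff g) h
  simp only [coeff_toGroupRing] at this
  split_ifs at this <;> simp_all

lemma toGroupRing_mul [DecidableEq G] [Mul G] {s t : Finset G} (h : #(s * t) = #s * #t) :
    toGroupRing (s * t) = toGroupRing s * toGroupRing t := by
  rw [toGroupRing, ← image_mul_product, sum_image (by simpa using card_mul_iff.1 h), toGroupRing,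
    toGroupRing, sum_mul_sum, sum_product]
  simp

lemma toGroupRing_mul_univ [Group G] [Fintype G] (s : Finset G) :
    toGroupRing s * toGroupRing univ = #s • toGroupRing (univ : Finset G) := by
  rw [toGroupRing, sum_mul, ← sum_const]
  refine sum_congr rfl fun g _ => ?_
  rw [toGroupRing, mul_sum]
  simp only [single_mul_single, one_mul]
  exact Fintype.sum_bijective (g * ·) (Group.mulLeft_bijective g) _ _ fun _ => rfl

lemma toGroupRing_univ_sdiff_one [DecidableEq G] [Group G] [Fintype G] :
    toGroupRing (univ \ {1} : Finset G) = toGroupRing univ - 1 := by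
  rw [toGroupRing, toGroupRing, sum_sdiff_eq_sub (subset_univ _), sum_singleton, one_def]

end GroupRing

lemma exists_eq_univ_sdiff_singleton {α : Type*} [Fintype α] [DecidableEq α] {s : Finset α}
    (hs : #s + 1 = Fintype.card α) : ∃ z, s = univ \ {z} := by
  obtain ⟨z, hz⟩ := card_eq_one.1 (show #sᶜ = 1 by rw [card_compl]; omega)
  exact ⟨z, by rw [← compl_eq_univ_sdiff, ← hz, compl_compl]⟩

lemma exists_fixed_point_of_involution_of_odd_card {α : Type*} {s : Finset α} (hs : Odd #s)
    (f : α → α) (hf : ∀ a ∈ s, f a ∈ s) (hff : ∀ a ∈ s, f (f a) = a) : ∃ a ∈ s, f a = a := by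
  by_contra! hfix
  have : ∑ _a ∈ s, (1 : ZMod 2) = 0 :=
    sum_involution (fun a _ => f a) (fun _ _ => by decide) (fun a ha _ => hfix a ha) hf hff
  rw [sum_const, nsmul_one, ZMod.natCast_eq_zero_iff_even] at this
  exact Nat.not_odd_iff_even.2 this hs

end Finset

lemma exists_sq_eq_of_odd_card {G : Type*} [Group G] [Fintype G] (hG : Odd (Fintype.card G))
    (z : G) : ∃ t, t ^ 2 = z := by
  obtain ⟨k, hk⟩ := hG
  refine ⟨z ^ (k + 1), ?_⟩
  rw [← pow_mul, show (k + 1) * 2 = Fintype.card G + 1 by omega, pow_succ, pow_card_eq_one,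
    one_mul]

section

variable {G : Type*} [CommGroup G] [DecidableEq G]

lemma isSymmetricSet_iff_inv_eq {A : Finset G} : IsSymmetricSet A ↔ A⁻¹ = A := by
  simp only [IsSymmetricSet, Finset.ext_iff, mem_inv', Iff.comm]

lemma exists_sq_eq_of_inv_eq_smul_of_odd {A : Finset G} {z : G} (hA : A⁻¹ = z • A)
    (hodd : Odd #A) : ∃ t, t ^ 2 = z := by
  have hmem (a : G) (ha : a ∈ A) : (z * a)⁻¹ ∈ A := by
    rw [← mem_inv', hA]
    exact smul_mem_smul_finset ha
  obtain ⟨a, -, ha⟩ :=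
    exists_fixed_point_of_involution_of_odd_card hodd (fun a => (z * a)⁻¹) hmem
      fun a _ => by simp [mul_comm]
  exact ⟨a⁻¹, by rw [pow_two]; nth_rewrite 1 [← ha]; simp⟩

lemma inv_smul_eq_of_inv_eq_sq_smul {A : Finset G} {t : G} (hA : A⁻¹ = t ^ 2 • A) :
    (t • A)⁻¹ = t • A := by
  ext x
  rw [mem_inv', ← inv_smul_mem_iff, ← inv_smul_mem_iff,
    show t⁻¹ • x⁻¹ = (t • x)⁻¹ by simp [mul_comm], ← mem_inv', hA, ← inv_smul_mem_iff, smul_smul]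
  simp [pow_two]

end

namespace IsRSNearFactorization

variable {G : Type*} [CommGroup G] [Fintype G] [DecidableEq G] {r s : ℕ} {A B : Finset G}

lemma card_eq (h : IsRSNearFactorization r s A B) : Fintype.card G = #A * #B + 1 := by
  have := Fintype.card_pos (α := G)
  have := h.2.2.1
  omega

lemma card_mul (h : IsRSNearFactorization r s A B) : #(A * B) = #A * #B := by
  rw [h.2.2.2, h.2.2.1, card_sdiff_of_subset (subset_univ _), card_singleton, card_univ]

lemma swap (h : IsRSNearFactorization r s A B) : IsRSNearFactorization s r B A := by
  obtain ⟨hr, hs, hcard, hmul⟩ := h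
  exact ⟨hs, hr, by rw [mul_comm, hcard], by rw [mul_comm, hmul]⟩

lemma smul (h : IsRSNearFactorization r s A B) (t : G) :
    IsRSNearFactorization r s (t • A) (t⁻¹ • B) := by
  obtain ⟨hr, hs, hcard, hmul⟩ := h
  simp only [IsRSNearFactorization, card_smul_finset]
  exact ⟨hr, hs, hcard, by rw [smul_mul_smul_comm, mul_inv_cancel, one_smul, hmul]⟩

lemma toGroupRing_mul_toGroupRing (h : IsRSNearFactorization r s A B) :
    toGroupRing A * toGroupRing B = toGroupRing univ - 1 := by
  rw [← toGroupRing_mul h.card_mul, h.2.2.2, toGroupRing_univ_sdiff_one]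

lemma eq_of_mul_eq_mul (h : IsRSNearFactorization r s A B) {X Y : Finset G}
    (hX : #(X * B) = #X * #B) (hY : #(Y * B) = #Y * #B) (hcard : #X = #Y)
    (hXY : X * B = Y * B) : X = Y := by
  have hcancel (Z : Finset G) (hZ : #(Z * B) = #Z * #B) :
      toGroupRing (Z * B) * toGroupRing A = #Z • toGroupRing univ - toGroupRing Z := by
    rw [toGroupRing_mul hZ, mul_assoc, mul_comm (toGroupRing B), h.toGroupRing_mul_toGroupRing,
      mul_sub, toGroupRing_mul_univ, mul_one]
  apply toGroupRing_injective
  have := hcancel X hX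
  rw [hXY, hcancel Y hY, hcard] at this
  exact (sub_right_inj.1 this).symm

lemma card_inv_mul (h : IsRSNearFactorization r s A B) : #(A⁻¹ * B) = #A⁻¹ * #B := by
  have hinj := card_mul_iff.1 h.card_mul
  rw [card_mul_iff]
  rintro ⟨x, b⟩ ⟨hx, hb⟩ ⟨x', b'⟩ ⟨hx', hb'⟩ hxb
  simp only [coe_inv, Set.mem_inv, mem_coe] at hx hb hx' hb' hxb
  have hswap : x'⁻¹ * b = x⁻¹ * b' :=
    calc x'⁻¹ * b = x'⁻¹ * x⁻¹ * (x * b) := by group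
      _ = x⁻¹ * b' := by rw [hxb, mul_comm x'⁻¹]; group
  obtain ⟨hxx', rfl⟩ := Prod.ext_iff.1 (@hinj (x'⁻¹, b) ⟨hx', hb⟩ (x⁻¹, b') ⟨hx, hb'⟩ hswap)
  rw [inv_inj.1 hxx']

lemma exists_inv_eq_smul (h : IsRSNearFactorization r s A B) : ∃ z : G, A⁻¹ = z • A := by
  obtain ⟨z, hz⟩ : ∃ z, A⁻¹ * B = univ \ {z} := by
    refine exists_eq_univ_sdiff_singleton ?_
    rw [h.card_inv_mul, card_inv, h.card_eq]
  refine ⟨z, h.eq_of_mul_eq_mul h.card_inv_mul ?_ ?_ ?_⟩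
  · rw [smul_mul_assoc, card_smul_finset, card_smul_finset, h.card_mul]
  · rw [card_inv, card_smul_finset]
  · rw [hz, smul_mul_assoc, h.2.2.2, smul_finset_sdiff, smul_finset_univ, smul_finset_singleton,
      smul_eq_mul, mul_one]

lemma isSymmetricSet_right (h : IsRSNearFactorization r s A B) (hA : IsSymmetricSet A) :
    IsSymmetricSet B := by
  rw [isSymmetricSet_iff_inv_eq] at hA ⊢
  have hmul : B⁻¹ * A = B * A := by
    calc B⁻¹ * A = (A * B)⁻¹ := by rw [mul_inv, hA, mul_comm]
      _ = B * A := by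
        rw [h.2.2.2, mul_comm B A, h.2.2.2]
        ext x
        simp
  refine h.swap.eq_of_mul_eq_mul ?_ h.swap.card_mul (card_inv B) hmul
  rw [hmul, h.swap.card_mul, card_inv]

end IsRSNearFactorization

theorem exists_symmetric_near_factorization {G : Type*} [CommGroup G] [Fintype G]
    [DecidableEq G] (r s : ℕ)
    (h : ∃ A B : Finset G, IsRSNearFactorization r s A B) :
    ∃ A B : Finset G, IsRSNearFactorization r s A B ∧
      IsSymmetricSet A ∧ IsSymmetricSet B := by
  obtain ⟨A, B, h⟩ := h
  obtain ⟨z, hz⟩ := h.exists_inv_eq_smul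
  obtain ⟨t, rfl⟩ : ∃ t, t ^ 2 = z := by
    rcases Nat.even_or_odd #A with hA | hA
    · exact exists_sq_eq_of_odd_card (h.card_eq ▸ (hA.mul_right _).add_one) z
    · exact exists_sq_eq_of_inv_eq_smul_of_odd hz hA
  have ht := h.smul t
  have hsymm := isSymmetricSet_iff_inv_eq.2 (inv_smul_eq_of_inv_eq_sq_smul hz)
  exact ⟨_, _, ht, hsymm, ht.isSymmetricSet_right hsymm⟩
end

section
/- Let p be a prime and let G be a finite abelian group of order 3p + 1. If G is not cyclic, then G has no nontrivial near-factorization. -/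
open Finset
open scoped Pointwise

/-!
Since `|A| |B| = 3p`, one factor, say `A`, has three elements. In an abelian group the products
`a b⁻¹` are also pairwise distinct, so `A * B⁻¹` misses exactly one element `c`, and then
`(c • A⁻¹, B)` is another near-factorization. A computation in `ℤ[G]` shows that `B` has at most one
partner of each size, hence `c • A⁻¹ = A`. The involution `a ↦ c a⁻¹` of the 3-set `A` has a fixed
point `a₀`, and `a₀⁻¹ • A = {1, u, v}` is closed under inversion: either `v = u⁻¹` or `u² = v² = 1`.
Either way it generates a proper subgroup `K` (as `G` is not cyclic, resp. as `|K| ≤ 4 < 3p + 1`),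
so `A` lies in a coset of `K`. Counting the products `a b` coset by coset then shows that `|A|`
divides both `|K|` and `|K| - 1`.
-/

/-- A pair `(A, B)` of subsets of a finite group `G` is a near-factorization of `G`
if `|A| * |B| = |G| - 1` and `A * B = G \ {e}`.  It is nontrivial if `|A| > 1` and `|B| > 1`. -/
def IsNontrivialNearFactorization {G : Type*} [Group G] [Fintype G] [DecidableEq G]
    (A B : Finset G) : Prop :=
  A.card * B.card = Fintype.card G - 1 ∧ A * B = Finset.univ \ {1} ∧
    1 < A.card ∧ 1 < B.card

theorem Finset.exists_fixed_of_involutive_of_odd_card {α : Type*} {s : Finset α} {f : α → α}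
    (hmaps : ∀ a ∈ s, f a ∈ s) (hf : ∀ a ∈ s, f (f a) = a) (hs : Odd s.card) :
    ∃ a ∈ s, f a = a := by
  by_contra! hfix
  have hsum : ∑ _a ∈ s, (1 : ZMod 2) = 0 :=
    sum_involution (fun a _ => f a) (fun _ _ => by decide) (fun a ha _ => hfix a ha) hmaps hf
  rw [sum_const, nsmul_one, ZMod.natCast_eq_zero_iff_even] at hsum
  exact Nat.not_even_iff_odd.mpr hs hsum

theorem Nat.eq_of_mul_eq_mul_prime {a b q p : ℕ} (hp : p.Prime) (h : a * b = q * p)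
    (hq : q ∣ a) (hb : b ≠ 1) : a = q := by
  obtain ⟨k, rfl⟩ := hq
  rcases Nat.eq_zero_or_pos q with rfl | hq0
  · simp
  have hkb : k * b = p := by
    rw [mul_assoc] at h
    exact Nat.eq_of_mul_eq_mul_left hq0 h
  rw [← hkb, Nat.prime_mul_iff] at hp
  rcases hp with ⟨-, rfl⟩ | ⟨-, rfl⟩
  · exact absurd rfl hb
  · exact mul_one q

namespace MonoidAlgebra

noncomputable def ofFinset {G : Type*} [Monoid G] (s : Finset G) : MonoidAlgebra ℤ G :=
  ∑ a ∈ s, single a 1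

variable {G : Type*} [DecidableEq G]

section Monoid

variable [Monoid G]

theorem coeff_ofFinset (s : Finset G) (g : G) :
    (ofFinset s).coeff g = if g ∈ s then 1 else 0 := by
  simp [ofFinset, Finsupp.finsetSum_apply, Finsupp.single_apply]

theorem ofFinset_injective : Function.Injective (ofFinset : Finset G → MonoidAlgebra ℤ G) := by
  intro s t hst
  ext g
  have := congr_arg (fun x : MonoidAlgebra ℤ G => x.coeff g) hst
  simp only [coeff_ofFinset] at this
  split_ifs at this <;> simp_all

theorem ofFinset_mul {s t : Finset G}
    (hst : Set.InjOn (fun p : G × G => p.1 * p.2) (s ×ˢ t : Set (G × G))) :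
    ofFinset s * ofFinset t = ofFinset (s * t) := by
  rw [ofFinset, ofFinset, sum_mul_sum, ← sum_product', ofFinset, Finset.mul_def,
    sum_image (by simpa using hst)]
  simp only [single_mul_single, mul_one]

end Monoid

variable [Group G] [Fintype G]

theorem ofFinset_mul_univ (s : Finset G) :
    ofFinset s * ofFinset univ = s.card • ofFinset (univ : Finset G) := by
  have hsingle (a : G) : single a 1 * ofFinset univ = ofFinset (univ : Finset G) := by
    rw [← sum_singleton (fun a => single a (1 : ℤ)) a, ← ofFinset, ofFinset_mul, singleton_mul,
      smul_finset_univ]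
    rintro ⟨x₁, x₂⟩ ⟨hx, -⟩ ⟨y₁, y₂⟩ ⟨hy, -⟩ hxy
    simp_all
  rw [ofFinset, sum_mul, sum_congr rfl (fun a _ => hsingle a), sum_const]

theorem ofFinset_univ_sdiff_one :
    ofFinset (univ \ {1} : Finset G) = ofFinset univ - 1 := by
  rw [ofFinset, ofFinset, sum_sdiff_eq_sub (subset_univ _), sum_singleton, one_def]

end MonoidAlgebra

theorem zpow_eq_one_or_self_of_inv_eq_self {G : Type*} [Group G] {u : G} (hu : u⁻¹ = u) (m : ℤ) :
    u ^ m = 1 ∨ u ^ m = u := by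
  have hsq : u ^ (2 : ℤ) = 1 := by rw [zpow_two, ← inv_mul_cancel u, hu]
  obtain ⟨k, rfl | rfl⟩ := Int.even_or_odd' m
  · simp [zpow_mul, hsq]
  · simp [zpow_add, zpow_mul, hsq]

theorem Subgroup.closure_ne_top_of_card_eq_three {G : Type*} [CommGroup G] [Fintype G]
    [DecidableEq G] {S : Finset G} (hS : ∀ s ∈ S, s⁻¹ ∈ S) (h1 : 1 ∈ S) (h3 : S.card = 3)
    (hnc : ¬IsCyclic G) (hG : 4 < Fintype.card G) : closure (S : Set G) ≠ ⊤ := by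
  obtain ⟨u, v, huv, hS'⟩ :=
    card_eq_two.mp (by rw [card_erase_of_mem h1, h3] : (S.erase 1).card = 2)
  have hS_eq : (S : Set G) = {1, u, v} := by rw [← insert_erase h1, hS']; simp
  have hinv (x : G) (hx : x ∈ S.erase 1) : x⁻¹ = u ∨ x⁻¹ = v := by
    have : x⁻¹ ∈ S.erase 1 :=
      mem_erase.mpr ⟨by simpa using (mem_erase.mp hx).1, hS x (mem_of_mem_erase hx)⟩
    simpa [hS'] using this
  rw [hS_eq, closure_insert_one]
  intro htop
  rcases hinv u (by simp [hS']) with hu | hu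
  · rcases hinv v (by simp [hS']) with hv | hv
    · exact huv (hu.symm.trans (by rw [← hv, inv_inv]))
    · have hall (x : G) : x ∈ ({1, u, v, u * v} : Finset G) := by
        obtain ⟨m, n, rfl⟩ := mem_closure_pair.mp (htop ▸ mem_top x)
        rcases zpow_eq_one_or_self_of_inv_eq_self hu m with hm | hm <;>
          rcases zpow_eq_one_or_self_of_inv_eq_self hv n with hn | hn <;> simp [hm, hn]
      have : Fintype.card G ≤ 4 :=
        (card_le_card fun x _ => hall x).trans card_le_four
      omega
  · refine hnc (isCyclic_iff_exists_zpowers_eq_top.mpr ⟨u, top_le_iff.mp (htop ▸ ?_)⟩)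
    rw [closure_le, Set.insert_subset_iff, Set.singleton_subset_iff, ← hu]
    exact ⟨mem_zpowers u, inv_mem (mem_zpowers u)⟩

def IsNearFactorization {G : Type*} [Group G] [Fintype G] [DecidableEq G] (A B : Finset G) :
    Prop :=
  A.card * B.card = Fintype.card G - 1 ∧ A * B = univ \ {1}

namespace IsNearFactorization

section Group

variable {G : Type*} [Group G] [Fintype G] [DecidableEq G] {A B : Finset G}

theorem card_mul (h : IsNearFactorization A B) : (A * B).card = A.card * B.card := by
  rw [h.1, h.2, card_univ_sdiff, card_singleton]

theorem injOn_mul (h : IsNearFactorization A B) :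
    Set.InjOn (fun p : G × G => p.1 * p.2) (A ×ˢ B : Set (G × G)) :=
  card_mul_iff.mp h.card_mul

end Group

variable {G : Type*} [CommGroup G] [Fintype G] [DecidableEq G] {A B : Finset G}

theorem symm (h : IsNearFactorization A B) : IsNearFactorization B A :=
  ⟨by rw [mul_comm, h.1], by rw [mul_comm, h.2]⟩

theorem exists_mul_inv_eq_univ_sdiff_singleton (h : IsNearFactorization A B) :
    ∃ c, A * B⁻¹ = univ \ {c} := by
  have hinj : Set.InjOn (fun p : G × G => p.1 * p.2) (A ×ˢ B⁻¹ : Set (G × G)) := by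
    rintro ⟨a, b⟩ ⟨ha, hb⟩ ⟨a', b'⟩ ⟨ha', hb'⟩ hab
    simp only [coe_inv, Set.mem_inv, mem_coe] at ha hb ha' hb' hab
    have hcross : a * b'⁻¹ = a' * b⁻¹ := by
      rw [mul_inv_eq_iff_eq_mul, mul_right_comm, eq_comm, mul_inv_eq_iff_eq_mul, hab]
    have := h.injOn_mul (x₁ := (a, b'⁻¹)) (x₂ := (a', b⁻¹)) ⟨ha, hb'⟩ ⟨ha', hb⟩ hcross
    simp_all
  have hcompl : (A * B⁻¹)ᶜ.card = 1 := by
    rw [card_compl, card_mul_iff.mpr hinj, card_inv, h.1]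
    have := Fintype.card_pos (α := G)
    omega
  obtain ⟨c, hc⟩ := card_eq_one.mp hcompl
  exact ⟨c, by rw [← hc, ← compl_eq_univ_sdiff, compl_compl]⟩

theorem smul_inv_left {c : G} (h : IsNearFactorization A B) (hc : A * B⁻¹ = univ \ {c}) :
    IsNearFactorization (c • A⁻¹) B := by
  have hinv : (univ \ {c} : Finset G)⁻¹ = univ \ {c⁻¹} := by ext; simp [inv_eq_iff_eq_inv]
  refine ⟨by rw [card_smul_finset, card_inv, h.1], ?_⟩
  rw [smul_mul_assoc, ← inv_inv B, ← mul_inv_rev, mul_comm B⁻¹, hc, hinv, smul_finset_sdiff,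
    smul_finset_univ, smul_finset_singleton, smul_eq_mul, mul_inv_cancel]

open MonoidAlgebra in
theorem eq_of_card_eq {A₁ A₂ : Finset G} (h₁ : IsNearFactorization A₁ B)
    (h₂ : IsNearFactorization A₂ B) (hcard : A₁.card = A₂.card) : A₁ = A₂ := by
  set x := ofFinset A₁ - ofFinset A₂
  have hxB : x * ofFinset B = 0 := by
    rw [sub_mul, ofFinset_mul h₁.injOn_mul, ofFinset_mul h₂.injOn_mul, h₁.2, h₂.2, sub_self]
  have hx : x = 0 := calc
    x = -(x * (ofFinset univ - 1)) := by
      rw [mul_sub, sub_mul, ofFinset_mul_univ, ofFinset_mul_univ, hcard, sub_self, mul_one,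
        zero_sub, neg_neg]
    _ = -(x * ofFinset B * ofFinset A₁) := by
      rw [mul_assoc, ofFinset_mul h₁.symm.injOn_mul, h₁.symm.2, ofFinset_univ_sdiff_one]
    _ = 0 := by rw [hxB, zero_mul, neg_zero]
  exact ofFinset_injective (sub_eq_zero.mp hx)

theorem exists_forall_mul_inv_mem (h : IsNearFactorization A B) : ∃ c, ∀ a ∈ A, c * a⁻¹ ∈ A := by
  obtain ⟨c, hc⟩ := h.exists_mul_inv_eq_univ_sdiff_singleton
  have hA : c • A⁻¹ = A :=
    (h.smul_inv_left hc).eq_of_card_eq h (by rw [card_smul_finset, card_inv])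
  exact ⟨c, fun a ha => hA ▸ smul_mem_smul_finset (inv_mem_inv ha)⟩

theorem card_dvd_card_coset_erase_one {H : Subgroup G} [DecidablePred (· ∈ H)] {t : G}
    (h : IsNearFactorization A B) (hA : ∀ a ∈ A, t⁻¹ * a ∈ H) (g : G) :
    A.card ∣ ((univ.filter fun x => g⁻¹ * x ∈ H).erase 1).card := by
  have hcoset (a : G) (ha : a ∈ A) (b : G) : g⁻¹ * (a * b) ∈ H ↔ g⁻¹ * (t * b) ∈ H := by
    have heq : g⁻¹ * (t * b) * (t⁻¹ * a) = g⁻¹ * (a * b) := by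
      rw [mul_assoc, mul_mul_mul_comm t, mul_inv_cancel, one_mul, mul_comm b]
    rw [← heq, H.mul_mem_cancel_right (hA a ha)]
  rw [← filter_erase, ← sdiff_singleton_eq_erase, ← h.2, Finset.mul_def, filter_image,
    card_image_of_injOn (h.injOn_mul.mono (coe_product A B ▸ coe_subset.mpr (filter_subset _ _))),
    card_filter, sum_product_right]
  -- all products `a * b` with a fixed `b` lie in one coset, so each `b` contributes `0` or `|A|`
  refine dvd_sum fun b _ => ?_
  rw [sum_congr rfl fun a ha => by rw [if_congr (hcoset a ha b) rfl rfl], sum_const, smul_eq_mul]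
  exact dvd_mul_right _ _

theorem card_eq_one_of_forall_inv_mul_mem {H : Subgroup G} {t : G} (h : IsNearFactorization A B)
    (hH : H ≠ ⊤) (hA : ∀ a ∈ A, t⁻¹ * a ∈ H) : A.card = 1 := by
  classical
  obtain ⟨g, hg⟩ : ∃ g, g ∉ H := by
    by_contra! hall
    exact hH (H.eq_top_iff'.mpr hall)
  have hcard (g : G) :
      (univ.filter fun x => g⁻¹ * x ∈ H).card = (univ.filter fun x => x ∈ H).card :=
    card_nbij' (g⁻¹ * ·) (g * ·) (fun x => by simp) (fun x => by simp) (fun x _ => by simp)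
      (fun x _ => by simp)
  have hdvd_sub := h.card_dvd_card_coset_erase_one hA 1
  have hdvd := h.card_dvd_card_coset_erase_one hA g
  rw [card_erase_of_mem (by simp), hcard] at hdvd_sub
  rw [erase_eq_of_notMem (by simp [hg]), hcard] at hdvd
  have hpos : 0 < (univ.filter fun x => x ∈ H).card := card_pos.mpr ⟨1, by simp⟩
  have hdvd_one := Nat.dvd_sub hdvd hdvd_sub
  rwa [Nat.sub_sub_self hpos, Nat.dvd_one] at hdvd_one

theorem card_ne_three (h : IsNearFactorization A B) (hnc : ¬IsCyclic G)
    (hG : 4 < Fintype.card G) : A.card ≠ 3 := by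
  intro h3
  obtain ⟨c, hc⟩ := h.exists_forall_mul_inv_mem
  obtain ⟨a₀, ha₀, hfix⟩ : ∃ a₀ ∈ A, c * a₀⁻¹ = a₀ :=
    exists_fixed_of_involutive_of_odd_card hc (fun a _ => by simp) (by rw [h3]; exact ⟨1, rfl⟩)
  set S := a₀⁻¹ • A
  have hS_inv : ∀ s ∈ S, s⁻¹ ∈ S := by
    simp only [S, mem_smul_finset, smul_eq_mul]
    rintro _ ⟨a, ha, rfl⟩
    refine ⟨c * a⁻¹, hc a ha, ?_⟩
    rw [mul_inv_eq_iff_eq_mul.mp hfix, mul_inv_rev, inv_inv, mul_assoc, inv_mul_cancel_left,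
      mul_comm]
  have hS_one : (1 : G) ∈ S := mem_smul_finset.mpr ⟨a₀, ha₀, inv_mul_cancel a₀⟩
  have hK : Subgroup.closure (S : Set G) ≠ ⊤ :=
    Subgroup.closure_ne_top_of_card_eq_three hS_inv hS_one (by rw [card_smul_finset, h3]) hnc hG
  have hA_coset : ∀ a ∈ A, a₀⁻¹ * a ∈ Subgroup.closure (S : Set G) :=
    fun a ha => Subgroup.subset_closure (smul_mem_smul_finset ha)
  have := h.card_eq_one_of_forall_inv_mul_mem hK hA_coset
  omega

end IsNearFactorization

theorem no_near_factorization_of_card_three_p_add_one {G : Type*} [CommGroup G] [Fintype G]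
    [DecidableEq G] (p : ℕ) (hp : p.Prime) (hcard : Fintype.card G = 3 * p + 1)
    (hnc : ¬ IsCyclic G) :
    ¬ ∃ A B : Finset G, IsNontrivialNearFactorization A B := by
  rintro ⟨A, B, hAB, hmul, hA, hB⟩
  have h : IsNearFactorization A B := ⟨hAB, hmul⟩
  have hG : 4 < Fintype.card G := by have := hp.two_le; omega
  have hAB3 : A.card * B.card = 3 * p := by rw [hAB, hcard, Nat.add_sub_cancel]
  rcases Nat.prime_three.dvd_mul.mp (Dvd.intro p hAB3.symm) with h3 | h3
  · exact h.card_ne_three hnc hG (Nat.eq_of_mul_eq_mul_prime hp hAB3 h3 hB.ne')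
  · exact h.symm.card_ne_three hnc hG
      (Nat.eq_of_mul_eq_mul_prime hp (by rw [mul_comm, hAB3]) h3 hA.ne')
end

section
/- Let G be a finite group with a nontrivial near-factorization (A, B), and suppose there is a surjective group homomorphism from G onto a finite abelian group H whose exponent divides 4 or divides 6. Then |A| ≥ |H| − 1. -/
open Finset
open scoped Pointwise

open Complex
open scoped ComplexConjugate

/-!
Pull the characters `ψ` of `H` back to `G` along `f` and write `ψ(A) = ∑_{a ∈ A} ψ(f a)`.
Since `A * B` hits every `g ≠ 1` exactly once, `ψ(A) ψ(B) = ∑_{g ≠ 1} ψ(f g) = -1`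
for `ψ ≠ 1`. The values of `ψ` are fourth or sixth roots of unity, so `ψ(A)` and `ψ(B)` lie
in `ℤ[i]` or in `ℤ[ω]`, where `|·|²` takes integer values; hence `|ψ(A)|² = 1`.
Parseval gives
`|A|² + |H| - 1 = |H| · #{(a, a') ∈ A × A | f a = f a'} ≥ |H| |A|`, that is
`(|A| - 1) (|A| + 1 - |H|) ≥ 0`.
-/

section NearFactorization

variable {G R : Type*} [Group G] [Fintype G] [DecidableEq G] [CommRing R] [IsDomain R]
  {A B : Finset G}

lemma sum_mul_sum_eq_neg_one_of_mul_eq_compl_one (hcard : #A * #B = Fintype.card G - 1)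
    (hAB : A * B = univ \ {1}) (χ : G →* R) (hχ : χ ≠ 1) :
    (∑ a ∈ A, χ a) * ∑ b ∈ B, χ b = -1 := by
  have hinj : Set.InjOn (fun p : G × G => p.1 * p.2) (A ×ˢ B : Finset (G × G)) := by
    rw [coe_product, ← card_mul_iff, hAB, card_sdiff_of_subset (subset_univ _), hcard]
    simp
  calc (∑ a ∈ A, χ a) * ∑ b ∈ B, χ b = ∑ p ∈ A ×ˢ B, χ (p.1 * p.2) := by
        simp_rw [sum_mul_sum, sum_product, map_mul]
    _ = ∑ g ∈ univ \ {1}, χ g := by rw [← hAB, ← image_mul_product, sum_image hinj]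
    _ = -1 := by rw [sum_sdiff_eq_sub (subset_univ _), sum_hom_units_eq_zero χ hχ]; simp

end NearFactorization

lemma exists_normSq_eq_intCast_of_mem_closure {μ : ℂ} {t : ℤ} (hnorm : conj μ * μ = 1)
    (htrace : μ + conj μ = t) {z : ℂ} (hz : z ∈ AddSubgroup.closure {1, μ}) :
    ∃ m : ℤ, normSq z = m := by
  obtain ⟨x, y, rfl⟩ := AddSubgroup.mem_closure_pair.1 hz
  refine ⟨x ^ 2 + t * x * y + y ^ 2, ofReal_injective ?_⟩
  simp only [normSq_eq_conj_mul_self, zsmul_eq_mul, map_add, map_mul, map_intCast, map_one]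
  push_cast
  linear_combination x * y * htrace + y ^ 2 * hnorm

lemma mem_closure_one_I_of_pow_four_eq_one {z : ℂ} (hz : z ^ 4 = 1) :
    z ∈ AddSubgroup.closure {1, I} := by
  have h : (z - 1) * (z + 1) * (z - I) * (z + I) = 0 := by
    linear_combination hz + (1 - z ^ 2) * I_sq
  simp only [mul_eq_zero, sub_eq_zero, add_eq_zero_iff_eq_neg] at h
  rw [AddSubgroup.mem_closure_pair]
  rcases h with ((rfl | rfl) | rfl) | rfl
  exacts [⟨1, 0, by simp⟩, ⟨-1, 0, by simp⟩, ⟨0, 1, by simp⟩, ⟨0, -1, by simp⟩]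

lemma mem_closure_one_of_pow_six_eq_one {ω z : ℂ} (hω : ω ^ 2 + ω + 1 = 0)
    (hz : z ^ 6 = 1) : z ∈ AddSubgroup.closure {1, ω} := by
  have h : (z - 1) * (z + 1) * (z - ω) * (z + ω) * (z - (-1 - ω)) * (z + (-1 - ω)) = 0 := by
    linear_combination hz + (z ^ 2 - 1) * (ω ^ 2 + ω - 1 - 2 * z ^ 2) * hω
  simp only [mul_eq_zero, sub_eq_zero, add_eq_zero_iff_eq_neg] at h
  rw [AddSubgroup.mem_closure_pair]
  rcases h with ((((rfl | rfl) | rfl) | rfl) | rfl) | rfl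
  exacts [⟨1, 0, by simp⟩, ⟨-1, 0, by simp⟩, ⟨0, 1, by simp⟩, ⟨0, -1, by simp⟩,
    ⟨-1, -1, by simp; ring⟩, ⟨1, 1, by simp; ring⟩]

lemma exists_normSq_sum_eq_intCast {ι : Type*} {k : ℕ} (hk : k ∣ 4 ∨ k ∣ 6) (s : Finset ι)
    {z : ι → ℂ} (hz : ∀ i ∈ s, z i ^ k = 1) :
    ∃ m : ℤ, normSq (∑ i ∈ s, z i) = m := by
  suffices ∃ μ : ℂ, ∃ t : ℤ, conj μ * μ = 1 ∧ μ + conj μ = t ∧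
      ∀ w : ℂ, w ^ k = 1 → w ∈ AddSubgroup.closure {1, μ} by
    obtain ⟨μ, t, hnorm, htrace, hmem⟩ := this
    exact exists_normSq_eq_intCast_of_mem_closure hnorm htrace
      (sum_mem fun i hi => hmem _ (hz i hi))
  rcases hk with ⟨c, hc⟩ | ⟨c, hc⟩
  · refine ⟨I, 0, by simp, by simp, fun w hw => mem_closure_one_I_of_pow_four_eq_one ?_⟩
    rw [hc, pow_mul, hw, one_pow]
  · obtain ⟨ω, hω, hconj⟩ : ∃ ω : ℂ, ω ^ 2 + ω + 1 = 0 ∧ conj ω = -1 - ω := by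
      have h3 : √3 ^ 2 = 3 := Real.sq_sqrt (by norm_num)
      refine ⟨⟨-1 / 2, √3 / 2⟩, ?_, ?_⟩ <;> apply Complex.ext <;>
        simp [pow_two] <;> nlinarith [h3]
    refine ⟨ω, -1, ?_, ?_, fun w hw => mem_closure_one_of_pow_six_eq_one hω ?_⟩
    · rw [hconj]; linear_combination -hω
    · rw [hconj]; push_cast; ring
    · rw [hc, pow_mul, hw, one_pow]

lemma normSq_eq_one_of_mul_eq_neg_one {z w : ℂ} (h : z * w = -1) {m n : ℤ}
    (hm : normSq z = m) (hn : normSq w = n) : normSq z = 1 := by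
  have hmn : m * n = 1 := by
    have : (m * n : ℝ) = 1 := by rw [← hm, ← hn, ← normSq_mul, h]; simp
    exact_mod_cast this
  have hm0 : 0 ≤ m := by exact_mod_cast hm ▸ normSq_nonneg z
  rw [hm, Int.eq_one_of_mul_eq_one_right hm0 hmn, Int.cast_one]

lemma card_le_card_filter_apply_eq {ι β : Type*} [DecidableEq ι] [DecidableEq β] (s : Finset ι)
    (F : ι → β) : #s ≤ #{p ∈ s ×ˢ s | F p.1 = F p.2} := by
  rw [← diag_card]
  refine card_le_card fun p hp => ?_
  obtain ⟨hp1, hp12⟩ := mem_diag.1 hp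
  simp [← hp12, hp1]

lemma sum_addChar_normSq_sum_apply {α ι : Type*} [AddCommGroup α] [Fintype α] [DecidableEq α]
    (s : Finset ι) (F : ι → α) :
    ∑ ψ : AddChar α ℂ, normSq (∑ i ∈ s, ψ (F i)) =
      Fintype.card α * #{p ∈ s ×ˢ s | F p.1 = F p.2} := by
  apply ofReal_injective
  push_cast
  simp_rw [normSq_eq_conj_mul_self, map_sum, ← AddChar.map_neg_eq_conj, sum_mul_sum,
    ← AddChar.map_add_eq_mul]
  calc ∑ ψ : AddChar α ℂ, ∑ i ∈ s, ∑ j ∈ s, ψ (-F i + F j)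
      = ∑ p ∈ s ×ˢ s, ∑ ψ : AddChar α ℂ, ψ (-F p.1 + F p.2) := by
        rw [sum_product, sum_comm]
        exact sum_congr rfl fun i _ => sum_comm
    _ = ∑ p ∈ s ×ˢ s with F p.1 = F p.2, (Fintype.card α : ℂ) := by
        simp_rw [AddChar.sum_apply_eq_ite, neg_add_eq_zero, sum_filter]
    _ = _ := by rw [sum_const, nsmul_eq_mul, mul_comm]

/-! Characters of `H` are taken as `AddChar (Additive H) ℂ`, to use Pontryagin duality. -/

section Pullback

variable {G H : Type*} [Group G] [Fintype G] [DecidableEq G] [CommGroup H]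
  {A B : Finset G} {f : G →* H}

lemma normSq_sum_addChar_ofMul_eq_one (hcard : #A * #B = Fintype.card G - 1)
    (hAB : A * B = univ \ {1}) (hf : Function.Surjective f)
    (hexp : Monoid.exponent H ∣ 4 ∨ Monoid.exponent H ∣ 6)
    {ψ : AddChar (Additive H) ℂ} (hψ : ψ ≠ 0) :
    normSq (∑ a ∈ A, ψ (.ofMul (f a))) = 1 := by
  let χ : G →* ℂ :=
    { toFun g := ψ (.ofMul (f g))
      map_one' := by simp
      map_mul' x y := by simp [AddChar.map_add_eq_mul] }
  have hχ : χ ≠ 1 := by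
    contrapose! hψ
    ext x
    obtain ⟨g, hg⟩ := hf x.toMul
    rw [AddChar.zero_apply, ← ofMul_toMul x, ← hg]
    exact DFunLike.congr_fun hψ g
  have hpow (g : G) : χ g ^ Monoid.exponent H = 1 := by
    show ψ (.ofMul (f g)) ^ _ = 1
    rw [← AddChar.map_nsmul_eq_pow, ← ofMul_pow, Monoid.pow_exponent_eq_one, ofMul_one,
      AddChar.map_zero_eq_one]
  obtain ⟨m, hm⟩ := exists_normSq_sum_eq_intCast hexp A fun a _ => hpow a
  obtain ⟨n, hn⟩ := exists_normSq_sum_eq_intCast hexp B fun b _ => hpow b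
  exact normSq_eq_one_of_mul_eq_neg_one
    (sum_mul_sum_eq_neg_one_of_mul_eq_compl_one hcard hAB χ hχ) hm hn

lemma sum_normSq_sum_addChar_ofMul [Fintype H] (hcard : #A * #B = Fintype.card G - 1)
    (hAB : A * B = univ \ {1}) (hf : Function.Surjective f)
    (hexp : Monoid.exponent H ∣ 4 ∨ Monoid.exponent H ∣ 6) :
    ∑ ψ : AddChar (Additive H) ℂ, normSq (∑ a ∈ A, ψ (.ofMul (f a))) =
      #A ^ 2 + (Fintype.card H - 1 : ℝ) := by
  rw [← add_sum_erase _ _ (mem_univ 0), sum_congr rfl fun ψ hψ =>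
    normSq_sum_addChar_ofMul_eq_one hcard hAB hf hexp (ne_of_mem_erase hψ)]
  simp [card_erase_of_mem, Nat.cast_sub Fintype.card_pos, sq]

lemma sq_card_add_card_sub_one_eq [Fintype H] [DecidableEq H]
    (hcard : #A * #B = Fintype.card G - 1) (hAB : A * B = univ \ {1}) (hf : Function.Surjective f)
    (hexp : Monoid.exponent H ∣ 4 ∨ Monoid.exponent H ∣ 6) :
    #A ^ 2 + (Fintype.card H - 1 : ℝ) = Fintype.card H * #{p ∈ A ×ˢ A | f p.1 = f p.2} := by
  rw [← sum_normSq_sum_addChar_ofMul hcard hAB hf hexp, sum_addChar_normSq_sum_apply,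
    Fintype.card_additive]
  simp only [EmbeddingLike.apply_eq_iff_eq]

end Pullback

theorem card_ge_of_quotient_small_exponent {G : Type*} [Group G] [Fintype G] [DecidableEq G]
    {H : Type*} [CommGroup H] [Fintype H]
    (A B : Finset G) (h : IsNontrivialNearFactorization A B)
    (f : G →* H) (hf : Function.Surjective f)
    (hexp : Monoid.exponent H ∣ 4 ∨ Monoid.exponent H ∣ 6) :
    Fintype.card H - 1 ≤ A.card := by
  classical
  obtain ⟨hcard, hAB, hA, -⟩ := h
  have hkey := sq_card_add_card_sub_one_eq hcard hAB hf hexp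
  have hdiag : (#A : ℝ) ≤ #{p ∈ A ×ˢ A | f p.1 = f p.2} := by
    exact_mod_cast card_le_card_filter_apply_eq A f
  have hA' : (1 : ℝ) < #A := by exact_mod_cast hA
  have hle : (Fintype.card H : ℝ) ≤ #A + 1 := by
    nlinarith [mul_le_mul_of_nonneg_left hdiag (Nat.cast_nonneg (Fintype.card H))]
  have : Fintype.card H ≤ #A + 1 := by exact_mod_cast hle
  omega
end

section
/- Let m and n be nonnegative integers and let G = (ℤ₃)^m × (ℤ₂)^n, i.e., the direct product of m copies of the cyclic group of order 3 and n copies of the cyclic group of order 2. Then G has no nontrivial near-factorization. -/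
/-!
For a near-factorization `A + B = G \ {0}` of a finite abelian group, every nontrivial
character `ψ` satisfies `ψ(A) ψ(B) = -1`. When the exponent of `G` divides `6`, character
values are sixth roots of unity, so `ψ(A)` is a unit of the Eisenstein integers `ℤ[ζ₆]` and
hence `|ψ(A)|² = 1`. Parseval, `∑_ψ |ψ(A)|² = |G| |A|`, then reads
`|A|² + |A| |B| = |G| |A|`, i.e. `|G| = |A| + |B|`; together with `|A| |B| = |G| - 1` this
forces `|A| = 1` or `|B| = 1`.
-/

open Finset
open scoped Pointwise

/-- A pair `(A, B)` of subsets of a finite additive group `G` is a near-factorization of `G`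
if `|A| * |B| = |G| - 1` and `A + B = G \ {0}`.  It is nontrivial if `|A| > 1` and `|B| > 1`. -/
def IsNontrivialAddNearFactorization {G : Type*} [AddGroup G] [Fintype G] [DecidableEq G]
    (A B : Finset G) : Prop :=
  A.card * B.card = Fintype.card G - 1 ∧ A + B = Finset.univ \ {0} ∧
    1 < A.card ∧ 1 < B.card

open scoped ComplexConjugate

namespace Eisenstein

noncomputable def ζ : ℂ := Complex.exp (2 * Real.pi * Complex.I / 6)

lemma isPrimitiveRoot_ζ : IsPrimitiveRoot ζ 6 := Complex.isPrimitiveRoot_exp 6 (by norm_num)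

lemma ζ_sq : ζ ^ 2 = ζ - 1 := by
  have h := isPrimitiveRoot_ζ.isRoot_cyclotomic (by norm_num)
  simp only [Polynomial.cyclotomic_six, Polynomial.IsRoot.def, Polynomial.eval_add,
    Polynomial.eval_sub, Polynomial.eval_pow, Polynomial.eval_X, Polynomial.eval_one] at h
  linear_combination h

lemma conj_ζ : conj ζ = 1 - ζ := by
  rw [← Complex.inv_eq_conj (isPrimitiveRoot_ζ.norm'_eq_one (by norm_num))]
  exact inv_eq_of_mul_eq_one_right (by linear_combination -ζ_sq)

def integers : Subring ℂ where
  carrier := {z | ∃ x y : ℤ, z = x + y * ζ}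
  mul_mem' := by
    rintro _ _ ⟨x, y, rfl⟩ ⟨x', y', rfl⟩
    refine ⟨x * x' - y * y', x * y' + x' * y + y * y', ?_⟩
    push_cast
    linear_combination y * y' * ζ_sq
  one_mem' := ⟨1, 0, by simp⟩
  add_mem' := by
    rintro _ _ ⟨x, y, rfl⟩ ⟨x', y', rfl⟩
    exact ⟨x + x', y + y', by push_cast; ring⟩
  zero_mem' := ⟨0, 0, by simp⟩
  neg_mem' := by
    rintro _ ⟨x, y, rfl⟩
    exact ⟨-x, -y, by push_cast; ring⟩

lemma ζ_mem : ζ ∈ integers := ⟨0, 1, by simp⟩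

lemma mem_of_pow_six_eq_one {ξ : ℂ} (hξ : ξ ^ 6 = 1) : ξ ∈ integers := by
  obtain ⟨i, -, rfl⟩ := isPrimitiveRoot_ζ.eq_pow_of_pow_eq_one hξ
  exact pow_mem ζ_mem i

lemma exists_normSq_eq_intCast {z : ℂ} (hz : z ∈ integers) :
    ∃ k : ℤ, Complex.normSq z = k := by
  obtain ⟨x, y, rfl⟩ := hz
  refine ⟨x ^ 2 + x * y + y ^ 2, Complex.ofReal_injective ?_⟩
  rw [← Complex.mul_conj, map_add, map_mul, conj_ζ, map_intCast, map_intCast]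
  push_cast
  linear_combination (-(y : ℂ) ^ 2) * ζ_sq

lemma normSq_eq_one_of_mul_eq_one {z w : ℂ} (hz : z ∈ integers) (hw : w ∈ integers)
    (h : z * w = 1) : Complex.normSq z = 1 := by
  obtain ⟨k, hk⟩ := exists_normSq_eq_intCast hz
  obtain ⟨l, hl⟩ := exists_normSq_eq_intCast hw
  have hkl : k * l = 1 := by
    have := congrArg Complex.normSq h
    rw [map_mul, map_one, hk, hl] at this
    exact_mod_cast this
  have hk0 : 0 ≤ k := by exact_mod_cast hk ▸ Complex.normSq_nonneg z
  rw [hk, Int.eq_one_of_mul_eq_one_right hk0 hkl, Int.cast_one]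

end Eisenstein

namespace AddChar

lemma apply_mem_eisenstein {G : Type*} [AddMonoid G] (hG : AddMonoid.exponent G ∣ 6)
    (ψ : AddChar G ℂ) (g : G) : ψ g ∈ Eisenstein.integers := by
  refine Eisenstein.mem_of_pow_six_eq_one ?_
  rw [← map_nsmul_eq_pow, AddMonoid.exponent_dvd_iff_forall_nsmul_eq_zero.mp hG, map_zero_eq_one]

variable {G : Type*} [AddCommGroup G] [Fintype G] [DecidableEq G]

/-- The cardinality condition makes `(a, b) ↦ a + b` injective on `A × B`, so every nonzero
element of `G` is hit exactly once and the character sum over `G \ {0}` is `0 - ψ 0`. -/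
lemma sum_mul_sum_eq_neg_one {R : Type*} [CommRing R] [IsDomain R] {A B : Finset G}
    (hcard : #A * #B = Fintype.card G - 1) (hAB : A + B = univ \ {0}) {ψ : AddChar G R}
    (hψ : ψ ≠ 0) : (∑ a ∈ A, ψ a) * ∑ b ∈ B, ψ b = -1 := by
  classical
  have hinj : Set.InjOn (fun p : G × G => p.1 + p.2) ↑(A ×ˢ B) := by
    rw [coe_product, ← card_add_iff, hAB, card_univ_sdiff, card_singleton, hcard]
  calc (∑ a ∈ A, ψ a) * ∑ b ∈ B, ψ b = ∑ p ∈ A ×ˢ B, ψ (p.1 + p.2) := by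
        simp_rw [sum_mul_sum, sum_product, map_add_eq_mul]
    _ = ∑ g ∈ univ \ {0}, ψ g := by rw [← hAB, ← image_add_product, sum_image hinj]
    _ = -1 := by
        rw [sum_sdiff_eq_sub (subset_univ _), sum_eq_ite, if_neg hψ, sum_singleton,
          map_zero_eq_one, zero_sub]

lemma sum_normSq_sum (A : Finset G) :
    ∑ ψ : AddChar G ℂ, Complex.normSq (∑ a ∈ A, ψ a) = Fintype.card G * #A := by
  refine Complex.ofReal_injective ?_
  push_cast
  simp_rw [← Complex.mul_conj, map_sum, ← map_neg_eq_conj, sum_mul_sum, ← map_add_eq_mul]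
  rw [sum_comm]
  simp_rw [sum_comm (s := univ), sum_apply_eq_ite, add_neg_eq_zero, sum_ite_eq, mul_comm]
  simp

end AddChar

open AddChar in
theorem not_isNontrivialAddNearFactorization_of_exponent_dvd_six {G : Type*} [AddCommGroup G]
    [Fintype G] [DecidableEq G] (hG : AddMonoid.exponent G ∣ 6) (A B : Finset G) :
    ¬ IsNontrivialAddNearFactorization A B := by
  rintro ⟨hcard, hAB, hA, hB⟩
  have hnormSq : ∀ ψ : AddChar G ℂ, ψ ≠ 0 → Complex.normSq (∑ a ∈ A, ψ a) = 1 := fun ψ hψ =>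
    Eisenstein.normSq_eq_one_of_mul_eq_one
      (sum_mem fun a _ => apply_mem_eisenstein hG ψ a)
      (neg_mem (sum_mem fun b _ => apply_mem_eisenstein hG ψ b))
      (by rw [mul_neg, sum_mul_sum_eq_neg_one hcard hAB hψ, neg_neg])
  have hparseval : (Fintype.card G * #A : ℝ) = #A ^ 2 + #A * #B := by
    rw [← sum_normSq_sum, ← add_sum_erase _ _ (mem_univ 0),
      sum_congr rfl fun ψ hψ => hnormSq ψ (ne_of_mem_erase hψ)]
    simp [card_erase_of_mem, card_eq, ← hcard, sq]
  have hsum : Fintype.card G = #A + #B := by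
    refine Nat.eq_of_mul_eq_mul_left (n := #A) (by omega) ?_
    have : (#A * Fintype.card G : ℝ) = #A * (#A + #B) := by linear_combination hparseval
    exact_mod_cast this
  rw [hsum] at hcard
  zify [show 1 ≤ #A + #B by omega] at hcard
  nlinarith

theorem no_near_factorization_Z3m_Z2n (m n : ℕ) :
    ¬ ∃ A B : Finset ((Fin m → ZMod 3) × (Fin n → ZMod 2)),
      IsNontrivialAddNearFactorization A B := by
  rintro ⟨A, B, hAB⟩
  refine not_isNontrivialAddNearFactorization_of_exponent_dvd_six ?_ A B hAB
  refine AddMonoid.exponent_dvd_iff_forall_nsmul_eq_zero.mpr fun g => ?_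
  ext i
  · simp [nsmul_eq_mul, show (6 : ZMod 3) = 0 from rfl]
  · simp [nsmul_eq_mul, show (6 : ZMod 2) = 0 from rfl]
end

section
/- Let m and n be nonnegative integers and let G = (ℤ₂)^n × (ℤ₄)^m, i.e., the direct product of n copies of the cyclic group of order 2 and m copies of the cyclic group of order 4. Then G has no nontrivial near-factorization. -/
open Finset GaussianInt
open scoped Pointwise ComplexConjugate

lemma quartic_root_gaussian {z : ℂ} (hz : z ^ 4 = 1) :
    ∃ w : GaussianInt, GaussianInt.toComplex w = z := by
  have h2 : (z ^ 2 - 1) * (z ^ 2 + 1) = 0 := by linear_combination hz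
  rcases mul_eq_zero.1 h2 with h | h
  · have : (z - 1) * (z + 1) = 0 := by linear_combination h
    rcases mul_eq_zero.1 this with h' | h'
    · exact ⟨1, by simp [sub_eq_zero.1 h']⟩
    · exact ⟨-1, by rw [map_neg, map_one]; exact (eq_neg_of_add_eq_zero_left h').symm⟩
  · have : (z - Complex.I) * (z + Complex.I) = 0 := by
      linear_combination h - Complex.I_sq
    rcases mul_eq_zero.1 this with h' | h'
    · exact ⟨⟨0, 1⟩, by rw [toComplex_def']; push_cast; rw [sub_eq_zero.1 h']; ring⟩
    · exact ⟨⟨0, -1⟩, by rw [toComplex_def']; push_cast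
                         rw [eq_neg_of_add_eq_zero_left h']; ring⟩


lemma no_near_factorization_of_exponent_four {G : Type*} [AddCommGroup G] [Fintype G]
    [DecidableEq G] (hG4 : ∀ g : G, 4 • g = 0) (A B : Finset G) :
    ¬ IsNontrivialAddNearFactorization A B := by
  rintro ⟨hcard, hsum, hA, hB⟩
  classical
  set N := Fintype.card G with hN
  have hNpos : 0 < N := Fintype.card_pos
  have hroot : ∀ (ψ : AddChar G ℂ) (g : G), ψ g ^ 4 = 1 := by
    intro ψ g
    rw [← AddChar.map_nsmul_eq_pow, hG4, AddChar.map_zero_eq_one]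
  have hmem : ∀ (ψ : AddChar G ℂ) (C : Finset G),
      ∃ w : GaussianInt, toComplex w = ∑ a ∈ C, ψ a := by
    intro ψ C
    have : (∑ a ∈ C, ψ a) ∈ GaussianInt.toComplex.range :=
      Subring.sum_mem _ fun a _ => RingHom.mem_range.2 (quartic_root_gaussian (hroot ψ a))
    exact RingHom.mem_range.1 this
  -- cardinality of A + B forces injectivity of addition on A ×ˢ B
  have hcardAB : ((A ×ˢ B).image fun p : G × G => p.1 + p.2).card = (A ×ˢ B).card := by
    rw [Finset.image_add_product, hsum, card_sdiff_of_subset (subset_univ _), card_singleton,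
      card_univ, card_product, ← hcard]
  have hinj := Finset.card_image_iff.1 hcardAB
  -- product of character sums
  have key : ∀ ψ : AddChar G ℂ, ψ ≠ 0 →
      (∑ a ∈ A, ψ a) * (∑ b ∈ B, ψ b) = -1 := by
    intro ψ hψ
    have h1 : (∑ a ∈ A, ψ a) * (∑ b ∈ B, ψ b) = ∑ p ∈ A ×ˢ B, ψ (p.1 + p.2) := by
      rw [Finset.sum_mul_sum, Finset.sum_product]
      simp [AddChar.map_add_eq_mul]
    have h2 : ∑ p ∈ A ×ˢ B, ψ (p.1 + p.2)
        = ∑ g ∈ (A ×ˢ B).image (fun p : G × G => p.1 + p.2), ψ g :=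
      (Finset.sum_image fun x hx y hy h =>
        hinj (Finset.mem_coe.2 hx) (Finset.mem_coe.2 hy) h).symm
    rw [h1, h2, Finset.image_add_product, hsum,
      Finset.sum_sdiff_eq_sub (subset_univ _), AddChar.sum_eq_zero_iff_ne_zero.2 hψ]
    simp
  -- norms
  have hnormsq : ∀ ψ : AddChar G ℂ, ψ ≠ 0 →
      Complex.normSq (∑ a ∈ A, ψ a) = 1 := by
    intro ψ hψ
    obtain ⟨z, hz⟩ := hmem ψ A
    obtain ⟨w, hw⟩ := hmem ψ B
    have hzw : z * w = -1 := by
      have : toComplex (z * w) = toComplex (-1) := by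
        rw [map_mul, hz, hw, key ψ hψ, map_neg, map_one]
      exact toComplex_injective this
    have hnorm : z.norm * w.norm = 1 := by
      rw [← Zsqrtd.norm_mul, hzw]
      simp [Zsqrtd.norm]
    have hz1 : z.norm = 1 := by
      rcases Int.mul_eq_one_iff_eq_one_or_neg_one.1 hnorm with ⟨h, -⟩ | ⟨h, -⟩
      · exact h
      · exact absurd h (by have := GaussianInt.norm_nonneg z; omega)
    rw [← hz, ← GaussianInt.intCast_real_norm, hz1]
    norm_num
  -- Parseval
  have parseval : ∑ ψ : AddChar G ℂ, (∑ a ∈ A, ψ a) * conj (∑ a ∈ A, ψ a)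
      = (N : ℂ) * A.card := by
    have expand : ∀ ψ : AddChar G ℂ, (∑ a ∈ A, ψ a) * conj (∑ a ∈ A, ψ a)
        = ∑ a ∈ A, ∑ a' ∈ A, ψ (a - a') := by
      intro ψ
      rw [map_sum, Finset.sum_mul_sum]
      refine Finset.sum_congr rfl fun a _ => Finset.sum_congr rfl fun a' _ => ?_
      rw [← AddChar.map_neg_eq_conj, ← AddChar.map_add_eq_mul, sub_eq_add_neg]
    simp_rw [expand]
    rw [Finset.sum_comm]
    have : ∀ a ∈ A, ∑ ψ : AddChar G ℂ, ∑ a' ∈ A, ψ (a - a') = (N : ℂ) := by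
      intro a ha
      rw [Finset.sum_comm]
      have : ∀ a' ∈ A, ∑ ψ : AddChar G ℂ, ψ (a - a')
          = if a - a' = 0 then (N : ℂ) else 0 := fun a' _ => AddChar.sum_apply_eq_ite _
      rw [Finset.sum_congr rfl this]
      simp only [sub_eq_zero]
      rw [Finset.sum_ite_eq A a fun _ => (N : ℂ), if_pos ha]
    rw [Finset.sum_congr rfl this, Finset.sum_const, nsmul_eq_mul, mul_comm]
  -- evaluate the Parseval sum using the norm computation
  have hsplit : ∑ ψ : AddChar G ℂ, (∑ a ∈ A, ψ a) * conj (∑ a ∈ A, ψ a)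
      = (A.card : ℂ) ^ 2 + (N - 1 : ℕ) := by
    rw [← Finset.add_sum_erase _ _ (Finset.mem_univ (0 : AddChar G ℂ))]
    have h0 : ((∑ a ∈ A, (0 : AddChar G ℂ) a) * conj (∑ a ∈ A, (0 : AddChar G ℂ) a))
        = (A.card : ℂ) ^ 2 := by
      simp [AddChar.zero_apply]
      ring
    have hrest : ∑ ψ ∈ (Finset.univ.erase (0 : AddChar G ℂ)),
        (∑ a ∈ A, ψ a) * conj (∑ a ∈ A, ψ a) = ((N - 1 : ℕ) : ℂ) := by
      have : ∀ ψ ∈ Finset.univ.erase (0 : AddChar G ℂ),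
          (∑ a ∈ A, ψ a) * conj (∑ a ∈ A, ψ a) = 1 := by
        intro ψ hψ
        rw [Complex.mul_conj, hnormsq ψ (Finset.ne_of_mem_erase hψ)]
        norm_num
      rw [Finset.sum_congr rfl this, Finset.sum_const, Finset.card_erase_of_mem (mem_univ _),
        Finset.card_univ, AddChar.card_eq, nsmul_eq_mul, mul_one]
    rw [h0, hrest]
  -- deduce the numeric identity and contradiction
  have hnat : A.card ^ 2 + (N - 1) = N * A.card := by
    have := hsplit.symm.trans parseval
    exact_mod_cast this
  have hab : A.card * B.card = N - 1 := hcard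
  have h1 : 1 ≤ N := hNpos
  -- go to integers
  have hz : (A.card : ℤ) ^ 2 + (A.card * B.card : ℕ) = N * A.card := by
    rw [hab]; exact_mod_cast hnat
  push_cast at hz
  have hNz : (N : ℤ) = A.card * B.card + 1 := by
    have : ((N - 1 : ℕ) : ℤ) = (N : ℤ) - 1 := by
      omega
    rw [← hab] at this
    push_cast at this
    omega
  rw [hNz] at hz
  have hA' : (2 : ℤ) ≤ A.card := by exact_mod_cast hA
  have hB' : (2 : ℤ) ≤ B.card := by exact_mod_cast hB
  nlinarith [mul_pos (mul_pos (by linarith : (0:ℤ) < (A.card:ℤ))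
    (by linarith : (0:ℤ) < (A.card:ℤ) - 1)) (by linarith : (0:ℤ) < (B.card:ℤ) - 1)]

theorem no_near_factorization_Z2n_Z4m (m n : ℕ) :
    ¬ ∃ A B : Finset ((Fin n → ZMod 2) × (Fin m → ZMod 4)),
      IsNontrivialAddNearFactorization A B := by
  rintro ⟨A, B, h⟩
  refine no_near_factorization_of_exponent_four ?_ A B h
  intro g
  have h2 : ∀ x : ZMod 2, 4 • x = 0 := by decide
  have h4 : ∀ x : ZMod 4, 4 • x = 0 := by decide
  refine Prod.ext ?_ ?_ <;> funext i
  · exact h2 (g.1 i)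
  · exact h4 (g.2 i)
end

section
/- Let m and n be positive integers, let G′ be a finite abelian group, and let G = ℤ_{2m} × ℤ_{4n} × G′. Then G has no near-factorization (A, B) in which |A| ≡ 3 or 5 (mod 8), or |B| ≡ 3 or 5 (mod 8). -/
/-!
Let `π : G → ℤ₂ × ℤ₄` be the natural surjection and let `u, v` count the elements of `A, B` in
each fibre of `π`. Since every nonzero element of `G` is uniquely a sum `a + b`, the convolution
`u * v` equals `|ker π| - δ₀`. Evaluating at a nontrivial character `ψ` of `ℤ₂ × ℤ₄`, with values
in `ℤ[i]`, gives `ψ̂(u) ψ̂(v) = -1`, so every `ψ̂(u)` is a unit: `±1` for the three real characters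
and one of `±1, ±i` for the complex ones. Because `u` is integer valued, these values pin down
`|A| = ∑ u` modulo `8` to `±1`; by symmetry the same holds for `|B|`.
-/

open Finset
open scoped Pointwise

/-- A pair `(A, B)` of subsets of a finite additive group `G` is a near-factorization of `G`
if `|A| * |B| = |G| - 1` and `A + B = G \ {0}`. -/
def IsAddNearFactorization {G : Type*} [AddGroup G] [Fintype G] [DecidableEq G]
    (A B : Finset G) : Prop :=
  A.card * B.card = Fintype.card G - 1 ∧ A + B = Finset.univ \ {0}

namespace AddChar

variable {H R : Type*} [AddCommGroup H] [Fintype H] [CommRing R]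

theorem sum_mul_sum_eq_sum_conv (ψ : AddChar H R) (u v : H → R) :
    (∑ x, u x * ψ x) * (∑ x, v x * ψ x) = ∑ x, (∑ y, u y * v (x - y)) * ψ x := by
  simp_rw [sum_mul_sum, sum_mul]
  conv_rhs => rw [sum_comm]
  refine sum_congr rfl fun y _ => Fintype.sum_equiv (Equiv.addLeft y) _ _ fun z => ?_
  simp only [Equiv.coe_addLeft, add_sub_cancel_left, map_add_eq_mul]
  ring

theorem isUnit_sum_mul_of_conv [IsDomain R] [DecidableEq H] {ψ : AddChar H R} (hψ : ψ ≠ 1)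
    {u v : H → R} {k : R} (huv : ∀ x, ∑ y, u y * v (x - y) = k - if x = 0 then 1 else 0) :
    IsUnit (∑ x, u x * ψ x) := by
  have hmul : (∑ x, u x * ψ x) * (∑ x, v x * ψ x) = -1 := by
    simp_rw [sum_mul_sum_eq_sum_conv, huv, sub_mul, ite_mul, one_mul, zero_mul]
    rw [sum_sub_distrib, ← mul_sum, sum_eq_zero_of_ne_one hψ, sum_ite_eq']
    simp
  exact IsUnit.of_mul_eq_one (-∑ x, v x * ψ x) (by rw [mul_neg, hmul, neg_neg])

def zmodProdChar (a b : ℕ) [NeZero a] [NeZero b] {ε ζ : R} (hε : ε ^ a = 1) (hζ : ζ ^ b = 1) :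
    AddChar (ZMod a × ZMod b) R :=
  (zmodChar a hε).compAddMonoidHom (AddMonoidHom.fst _ _) *
    (zmodChar b hζ).compAddMonoidHom (AddMonoidHom.snd _ _)

theorem zmodProdChar_apply {a b : ℕ} [NeZero a] [NeZero b] {ε ζ : R} (hε : ε ^ a = 1)
    (hζ : ζ ^ b = 1) (x : ZMod a × ZMod b) :
    zmodProdChar a b hε hζ x = ε ^ x.1.val * ζ ^ x.2.val :=
  rfl

end AddChar

theorem GaussianInt.re_im_of_isUnit {z : GaussianInt} (hz : IsUnit z) :
    z.re = 0 ∧ (z.im = 1 ∨ z.im = -1) ∨ z.im = 0 ∧ (z.re = 1 ∨ z.re = -1) := by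
  have hnorm : z.re * z.re + z.im * z.im = 1 := by
    have := (Zsqrtd.norm_eq_one_iff' (by norm_num) z).2 hz
    rw [Zsqrtd.norm_def] at this
    linarith
  have ⟨hre₁, hre₂⟩ : -1 ≤ z.re ∧ z.re ≤ 1 := by
    constructor <;> nlinarith [mul_self_nonneg z.im]
  have ⟨him₁, him₂⟩ : -1 ≤ z.im ∧ z.im ≤ 1 := by
    constructor <;> nlinarith [mul_self_nonneg z.re]
  interval_cases z.re <;> interval_cases z.im <;> simp_all

section ZModTwoProdZModFour

theorem sum_zmod_two_prod_zmod_four {M : Type*} [AddCommMonoid M] (f : ZMod 2 × ZMod 4 → M) :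
    ∑ x, f x =
      f (0, 0) + f (0, 1) + f (0, 2) + f (0, 3) + f (1, 0) + f (1, 1) + f (1, 2) + f (1, 3) := by
  rw [Fintype.sum_prod_type]
  change ∑ x : Fin 2, ∑ y : Fin 4, f (x, y) = _
  simp only [Fin.sum_univ_two, Fin.sum_univ_four, add_assoc]
  rfl

variable {R : Type*} [CommRing R]

theorem sum_mul_zmodProdChar_two_four {ε ζ : R} (hε : ε ^ 2 = 1) (hζ : ζ ^ 4 = 1)
    (u : ZMod 2 × ZMod 4 → R) :
    ∑ x, u x * AddChar.zmodProdChar 2 4 hε hζ x =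
      (u (0, 0) + ε * u (1, 0)) + (u (0, 1) + ε * u (1, 1)) * ζ +
        (u (0, 2) + ε * u (1, 2)) * ζ ^ 2 + (u (0, 3) + ε * u (1, 3)) * ζ ^ 3 := by
  have h₁ : (1 : ZMod 2).val = 1 := rfl
  have k₁ : (1 : ZMod 4).val = 1 := rfl
  have k₂ : (2 : ZMod 4).val = 2 := rfl
  have k₃ : (3 : ZMod 4).val = 3 := rfl
  simp only [sum_zmod_two_prod_zmod_four, AddChar.zmodProdChar_apply, ZMod.val_zero,
    h₁, k₁, k₂, k₃]
  ring

theorem isUnit_of_conv_zmod_two_prod_zmod_four [IsDomain R] {u v : ZMod 2 × ZMod 4 → R} {k : R}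
    (huv : ∀ x, ∑ y, u y * v (x - y) = k - if x = 0 then 1 else 0)
    {ε ζ : R} (hε : ε ^ 2 = 1) (hζ : ζ ^ 4 = 1) (hεζ : ε ≠ 1 ∨ ζ ≠ 1) :
    IsUnit ((u (0, 0) + ε * u (1, 0)) + (u (0, 1) + ε * u (1, 1)) * ζ +
      (u (0, 2) + ε * u (1, 2)) * ζ ^ 2 + (u (0, 3) + ε * u (1, 3)) * ζ ^ 3) := by
  have hψ : AddChar.zmodProdChar 2 4 hε hζ ≠ 1 := by
    rw [AddChar.ne_one_iff]
    rcases hεζ with hε₁ | hζ₁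
    · exact ⟨(1, 0), by change ε ^ 1 * ζ ^ 0 ≠ 1; simpa using hε₁⟩
    · exact ⟨(0, 1), by change ε ^ 0 * ζ ^ 1 ≠ 1; simpa using hζ₁⟩
  rw [← sum_mul_zmodProdChar_two_four hε hζ]
  exact AddChar.isUnit_sum_mul_of_conv hψ huv

theorem sum_mod_eight_of_conv {u v : ZMod 2 × ZMod 4 → ℤ} {k : ℤ}
    (huv : ∀ x, ∑ y, u y * v (x - y) = k - if x = 0 then 1 else 0) :
    (∑ x, u x) % 8 = 1 ∨ (∑ x, u x) % 8 = 7 := by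
  have hgauss {ε ζ : GaussianInt} :=
    isUnit_of_conv_zmod_two_prod_zmod_four (u := fun x => (u x : GaussianInt))
      (v := fun x => v x) (k := k) (ε := ε) (ζ := ζ) fun x => by
        exact_mod_cast congrArg Int.cast (huv x)
  have hi : (Zsqrtd.sqrtd : GaussianInt) ^ 4 = 1 := by decide
  have hP := Int.isUnit_iff.1 <| isUnit_of_conv_zmod_two_prod_zmod_four huv
    (ε := -1) (ζ := 1) (by norm_num) (one_pow _) (by norm_num)
  have hD := Int.isUnit_iff.1 <| isUnit_of_conv_zmod_two_prod_zmod_four huv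
    (ε := 1) (ζ := -1) (one_pow _) (by norm_num) (by norm_num)
  have hQ := Int.isUnit_iff.1 <| isUnit_of_conv_zmod_two_prod_zmod_four huv
    (ε := -1) (ζ := -1) (by norm_num) (by norm_num) (by norm_num)
  have hC := GaussianInt.re_im_of_isUnit <| hgauss (ε := 1) (one_pow _) hi (by decide)
  have hC' := GaussianInt.re_im_of_isUnit <| hgauss (ε := -1) (by norm_num) hi (by decide)
  norm_num at hP hD hQ
  simp only [pow_succ, pow_zero, one_mul, mul_one, Zsqrtd.dmuld, Int.cast_neg, Int.cast_one,
    mul_neg, neg_mul, Zsqrtd.re_add, Zsqrtd.re_intCast, Zsqrtd.re_mul, Zsqrtd.re_sqrtd, mul_zero,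
    Zsqrtd.im_add, Zsqrtd.im_intCast, add_zero, Zsqrtd.im_sqrtd, Zsqrtd.re_neg, neg_zero,
    Zsqrtd.im_mul, zero_add, Zsqrtd.im_neg] at hC hC'
  rw [sum_zmod_two_prod_zmod_four]
  omega

end ZModTwoProdZModFour

section Fibers

variable {G H : Type*} [AddCommGroup G] [AddCommGroup H] [DecidableEq H]

theorem sum_card_fiber_mul_card_fiber [Fintype H] (π : G →+ H) (s t : Finset G) (x : H) :
    ∑ y, #{a ∈ s | π a = y} * #{b ∈ t | π b = x - y} = #{p ∈ s ×ˢ t | π (p.1 + p.2) = x} := by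
  rw [card_eq_sum_card_fiberwise (f := fun p => π p.1) (t := univ) fun _ _ => mem_univ _]
  refine sum_congr rfl fun y _ => ?_
  rw [← card_product]
  congr 1
  ext ⟨a, b⟩
  simp only [mem_product, mem_filter, map_add]
  constructor
  · rintro ⟨⟨ha, hay⟩, hb, hbx⟩
    exact ⟨⟨⟨ha, hb⟩, by rw [hay, hbx, add_sub_cancel]⟩, hay⟩
  · rintro ⟨⟨⟨ha, hb⟩, hx⟩, hay⟩
    exact ⟨⟨ha, hay⟩, hb, by rw [← hx, hay, add_sub_cancel_left]⟩

variable [Fintype G] [DecidableEq G]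

theorem card_filter_ne_zero_add_ite (π : G →+ H) (x : H) :
    #{g ∈ (univ \ {0} : Finset G) | π g = x} + (if x = 0 then 1 else 0) = #{g | π g = x} := by
  have herase : {g ∈ (univ \ {0} : Finset G) | π g = x} = ({g | π g = x} : Finset G).erase 0 := by
    ext g
    simp
  rw [herase]
  split_ifs with hx
  · exact card_erase_add_one (by simp [hx])
  · rw [erase_eq_of_notMem (by simp [Ne.symm hx]), add_zero]

namespace IsAddNearFactorization

variable {A B : Finset G}

theorem symm (h : IsAddNearFactorization A B) : IsAddNearFactorization B A :=
  ⟨by rw [mul_comm, h.1], by rw [add_comm, h.2]⟩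

theorem injOn_add (h : IsAddNearFactorization A B) :
    (A ×ˢ B : Set (G × G)).InjOn fun p => p.1 + p.2 := by
  rw [← card_add_iff, h.2, h.1, card_sdiff_of_subset (subset_univ _), card_univ, card_singleton]

theorem sum_card_fiber_mul [Fintype H] (h : IsAddNearFactorization A B) {π : G →+ H}
    (hπ : Function.Surjective π) (x : H) :
    ∑ y, (#{a ∈ A | π a = y} : ℤ) * #{b ∈ B | π b = x - y} =
      #{g | π g = 0} - if x = 0 then 1 else 0 := by
  have hpairs : #{p ∈ A ×ˢ B | π (p.1 + p.2) = x} = #{g ∈ univ \ {0} | π g = x} := by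
    rw [← h.2, ← image_add_product, filter_image, card_image_of_injOn (h.injOn_add.mono ?_)]
    exact fun p hp => mem_product.1 (mem_filter.1 hp).1
  have hcount := (card_filter_ne_zero_add_ite π x).trans
    (AddMonoidHom.card_fiber_eq_of_mem_range π (hπ x) (hπ 0))
  rw [← hpairs, ← sum_card_fiber_mul_card_fiber] at hcount
  rw [eq_sub_iff_add_eq]
  exact_mod_cast hcount

theorem card_mod_eight (h : IsAddNearFactorization A B) {π : G →+ ZMod 2 × ZMod 4}
    (hπ : Function.Surjective π) : #A % 8 = 1 ∨ #A % 8 = 7 := by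
  have hmod := sum_mod_eight_of_conv (u := fun y => #{a ∈ A | π a = y})
    (v := fun y => #{b ∈ B | π b = y}) (h.sum_card_fiber_mul hπ)
  rw [card_eq_sum_card_fiberwise (f := π) (t := univ) fun _ _ => mem_univ _]
  simp only [← Nat.cast_sum] at hmod
  omega

end IsAddNearFactorization

end Fibers

theorem no_near_factorization_Z2m_Z4n (m n : ℕ) [NeZero m] [NeZero n]
    {G' : Type*} [AddCommGroup G'] [Fintype G'] [DecidableEq G']
    (A B : Finset (ZMod (2 * m) × ZMod (4 * n) × G'))
    (h : IsAddNearFactorization A B) :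
    ¬ (A.card % 8 = 3 ∨ A.card % 8 = 5 ∨ B.card % 8 = 3 ∨ B.card % 8 = 5) := by
  let π : ZMod (2 * m) × ZMod (4 * n) × G' →+ ZMod 2 × ZMod 4 :=
    (ZMod.castHom (dvd_mul_right 2 m) (ZMod 2)).toAddMonoidHom.prodMap
      ((ZMod.castHom (dvd_mul_right 4 n) (ZMod 4)).toAddMonoidHom.comp (AddMonoidHom.fst _ _))
  have hπ : Function.Surjective π :=
    (ZMod.castHom_surjective (dvd_mul_right 2 m)).prodMap
      ((ZMod.castHom_surjective (dvd_mul_right 4 n)).comp Prod.fst_surjective)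
  have hA := h.card_mod_eight hπ
  have hB := h.symm.card_mod_eight hπ
  omega
end

section
/- Let G be a finite abelian group of order 144 that is not cyclic. Then G has no nontrivial near-factorization. -/
/-!
Push a near-factorization `A * B = G \ {1}` forward along a surjection `G → Q`: the fibre counts
`Ā, B̄ : Q → ℕ` satisfy `Ā ⋆ B̄ = k - δ₁`. Fourier transforming with characters of `Q` that take
values in the Gaussian or Eisenstein integers gives `Â(χ) B̂(χ) = -1` for `χ ≠ 1`, so `Â(χ)` is a
unit of these imaginary quadratic rings and has norm `1`; Parseval then yields
`|Q| Σ Ā(y)² = |A|² + |Q| - 1`. A non-cyclic abelian group of order `144` maps onto `(ℤ/3)²`,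
`ℤ/4 × ℤ/2` or `(ℤ/2)³`, and `|A| ∈ {11, 13}`: the identity fails modulo `9` for `(ℤ/3)²`, and for
`|Q| = 8` it contradicts `Σ (Ā(y) - 1)(Ā(y) - 2) ≥ 0`.
-/

open Finset
open scoped Pointwise

section Pairing

variable {Q R : Type*} [CommGroup Q] [Fintype Q] [CommRing R] [StarRing R]

structure IsSelfDualPairing (ψ : Q → Q → R) : Prop where
  map_one_right : ∀ t, ψ t 1 = 1
  map_mul_right : ∀ t y z, ψ t (y * z) = ψ t y * ψ t z
  symm : ∀ t y, ψ t y = ψ y t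
  star_apply : ∀ t y, star (ψ t y) = ψ t y⁻¹
  sum_eq_zero : ∀ t, t ≠ 1 → ∑ y, ψ t y = 0

def dft (ψ : Q → Q → R) (u : Q → ℤ) (t : Q) : R := ∑ y, (u y : R) * ψ t y

namespace IsSelfDualPairing

variable {ψ : Q → Q → R}

theorem sum_apply_left [DecidableEq Q] (hψ : IsSelfDualPairing ψ) (y : Q) :
    ∑ t, ψ t y = if y = 1 then (Fintype.card Q : R) else 0 := by
  split_ifs with hy
  · simp [hy, hψ.map_one_right]
  · simpa only [hψ.symm _ y] using hψ.sum_eq_zero y hy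

theorem dft_one (hψ : IsSelfDualPairing ψ) (u : Q → ℤ) : dft ψ u 1 = ∑ y, (u y : R) := by
  simp [dft, hψ.symm 1, hψ.map_one_right]

theorem dft_mul_dft (hψ : IsSelfDualPairing ψ) (u v : Q → ℤ) (t : Q) :
    dft ψ u t * dft ψ v t = ∑ x, ((∑ y, u y * v (y⁻¹ * x) : ℤ) : R) * ψ t x := by
  calc dft ψ u t * dft ψ v t = ∑ y, ∑ z, (u y * v z : R) * ψ t (y * z) := by
        rw [dft, dft, sum_mul_sum]
        refine sum_congr rfl fun y _ => sum_congr rfl fun z _ => ?_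
        rw [hψ.map_mul_right]
        ring
    _ = ∑ y, ∑ x, (u y * v (y⁻¹ * x) : R) * ψ t x :=
        sum_congr rfl fun y _ => Fintype.sum_equiv (Equiv.mulLeft y) _ _ fun z => by simp
    _ = _ := by
        rw [sum_comm]
        push_cast
        simp only [sum_mul]

theorem dft_mul_dft_eq_neg_one [DecidableEq Q] (hψ : IsSelfDualPairing ψ) {u v : Q → ℤ} {k : ℤ}
    (hconv : ∀ x, ∑ y, u y * v (y⁻¹ * x) = k - if x = 1 then 1 else 0) {t : Q} (ht : t ≠ 1) :
    dft ψ u t * dft ψ v t = -1 := by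
  simp [hψ.dft_mul_dft, hconv, sub_mul, sum_sub_distrib, ← mul_sum, hψ.sum_eq_zero t ht,
    hψ.map_one_right]

theorem sum_dft_mul_star (hψ : IsSelfDualPairing ψ) (u : Q → ℤ) :
    ∑ t, dft ψ u t * star (dft ψ u t) = Fintype.card Q * ∑ y, (u y : R) ^ 2 := by
  classical
  have hexpand (t : Q) : dft ψ u t * star (dft ψ u t)
      = ∑ y, ∑ z, (u y * u z : R) * ψ t (y * z⁻¹) := by
    simp only [dft, star_sum, star_mul', star_intCast, hψ.star_apply, sum_mul_sum]
    refine sum_congr rfl fun y _ => sum_congr rfl fun z _ => ?_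
    rw [hψ.map_mul_right]
    ring
  calc ∑ t, dft ψ u t * star (dft ψ u t)
        = ∑ y, ∑ z, (u y * u z : R) * ∑ t, ψ t (y * z⁻¹) := by
        simp_rw [hexpand, mul_sum]
        rw [sum_comm]
        exact sum_congr rfl fun y _ => sum_comm
    _ = ∑ y, Fintype.card Q * (u y : R) ^ 2 := by
        simp [hψ.sum_apply_left, mul_inv_eq_one, sq, mul_comm]
    _ = _ := (mul_sum ..).symm

end IsSelfDualPairing

end Pairing

namespace QuadraticAlgebra

variable {a b : ℤ}

theorem norm_nonneg (hab : b ^ 2 + 4 * a ≤ 0) (z : QuadraticAlgebra ℤ a b) : 0 ≤ z.norm := by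
  have h : 4 * z.norm = (2 * z.re + b * z.im) ^ 2 - (b ^ 2 + 4 * a) * z.im ^ 2 := by
    rw [norm_def]; ring
  nlinarith [sq_nonneg (2 * z.re + b * z.im), sq_nonneg z.im]

theorem mul_star_eq_one_of_isUnit (hab : b ^ 2 + 4 * a ≤ 0) {z : QuadraticAlgebra ℤ a b}
    (hz : IsUnit z) : z * star z = 1 := by
  rcases Int.isUnit_iff.mp (isUnit_iff_norm_isUnit.mp hz) with h | h
  · rw [← algebraMap_norm_eq_mul_star, h, map_one]
  · linarith [norm_nonneg hab z]

end QuadraticAlgebra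

theorem IsSelfDualPairing.card_mul_sum_sq_add_one {Q : Type*} [CommGroup Q] [Fintype Q]
    [DecidableEq Q] {a b : ℤ} (hab : b ^ 2 + 4 * a ≤ 0) {ψ : Q → Q → QuadraticAlgebra ℤ a b}
    (hψ : IsSelfDualPairing ψ)
    {u v : Q → ℤ} {k : ℤ} (hconv : ∀ x, ∑ y, u y * v (y⁻¹ * x) = k - if x = 1 then 1 else 0) :
    Fintype.card Q * ∑ y, u y ^ 2 + 1 = (∑ y, u y) ^ 2 + Fintype.card Q := by
  have hunit : ∀ t ∈ univ.erase (1 : Q), dft ψ u t * star (dft ψ u t) = 1 := fun t ht =>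
    QuadraticAlgebra.mul_star_eq_one_of_isUnit hab <| IsUnit.of_mul_eq_one (-dft ψ v t) <| by
      rw [mul_neg, hψ.dft_mul_dft_eq_neg_one hconv (ne_of_mem_erase ht), neg_neg]
  have h := hψ.sum_dft_mul_star u
  rw [← add_sum_erase _ _ (mem_univ 1), sum_congr rfl hunit, hψ.dft_one, star_sum] at h
  simp only [star_intCast, sum_const, card_erase_of_mem (mem_univ _), card_univ, nsmul_eq_mul,
    mul_one] at h
  have hq : 1 ≤ Fintype.card Q := Fintype.card_pos
  apply Int.cast_injective (α := QuadraticAlgebra ℤ a b)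
  push_cast [Nat.cast_sub hq] at h ⊢
  linear_combination -h

section Pairings

open scoped QuadraticAlgebra

-- `ω` is a primitive cube root of unity in `QuadraticAlgebra ℤ (-1) (-1)` (`ω² = -1 - ω`) and a
-- square root of `-1` in `QuadraticAlgebra ℤ (-1) 0`.
def eisensteinPairing (t y : Multiplicative (ZMod 3) × Multiplicative (ZMod 3)) :
    QuadraticAlgebra ℤ (-1) (-1) :=
  ω ^ (t.1.toAdd * y.1.toAdd + t.2.toAdd * y.2.toAdd).val

def gaussianPairing (t y : Multiplicative (ZMod 4) × Multiplicative (ZMod 2)) :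
    QuadraticAlgebra ℤ (-1) 0 :=
  ω ^ (t.1.toAdd * y.1.toAdd).val * (-1) ^ (t.2.toAdd * y.2.toAdd).val

def signPairing
    (t y : Multiplicative (ZMod 2) × Multiplicative (ZMod 2) × Multiplicative (ZMod 2)) :
    QuadraticAlgebra ℤ (-1) 0 :=
  (-1) ^ (t.1.toAdd * y.1.toAdd + t.2.1.toAdd * y.2.1.toAdd + t.2.2.toAdd * y.2.2.toAdd).val

theorem isSelfDualPairing_eisensteinPairing : IsSelfDualPairing eisensteinPairing :=
  ⟨by decide, by decide, by decide, by decide, by decide⟩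

theorem isSelfDualPairing_gaussianPairing : IsSelfDualPairing gaussianPairing :=
  ⟨by decide, by decide, by decide, by decide, by decide⟩

theorem isSelfDualPairing_signPairing : IsSelfDualPairing signPairing :=
  ⟨by decide, by decide, by decide, by decide, by decide⟩

end Pairings

section NearFactorization

variable {G Q : Type*} [Group G] [Group Q] [Fintype Q] [DecidableEq Q]

theorem sum_card_fiber_mul_card_fiber_s13 (φ : G →* Q) (A B : Finset G) (x : Q) :
    ∑ y, #{g ∈ A | φ g = y} * #{g ∈ B | φ g = y⁻¹ * x} = #{p ∈ A ×ˢ B | φ (p.1 * p.2) = x} := by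
  rw [card_eq_sum_card_fiberwise (f := fun p => φ p.1) (t := univ) fun _ _ => mem_univ _]
  refine sum_congr rfl fun y _ => ?_
  rw [← card_product, filter_filter]
  congr 1
  ext ⟨g, h⟩
  simp only [mem_filter, mem_product, map_mul]
  constructor
  · rintro ⟨⟨hg, rfl⟩, hh, hx⟩
    exact ⟨⟨hg, hh⟩, by rw [hx, mul_inv_cancel_left], rfl⟩
  · rintro ⟨⟨hg, hh⟩, hx, rfl⟩
    exact ⟨⟨hg, rfl⟩, hh, by rw [← hx, inv_mul_cancel_left]⟩

variable [Fintype G] [DecidableEq G] {A B : Finset G}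

theorem card_filter_product_mul (hcard : #A * #B = Fintype.card G - 1)
    (hAB : A * B = univ \ {1}) (P : G → Prop) [DecidablePred P] :
    #{p ∈ A ×ˢ B | P (p.1 * p.2)} = #{g | g ≠ 1 ∧ P g} := by
  have himage : (A ×ˢ B).image (fun p : G × G => p.1 * p.2) = univ \ {1} := by
    rw [image_mul_product, hAB]
  have hinj : Set.InjOn (fun p : G × G => p.1 * p.2) ↑(A ×ˢ B) := by
    refine injOn_of_card_image_eq ?_
    rw [himage, card_product, hcard, card_sdiff_of_subset (subset_univ _), card_univ,
      card_singleton]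
  rw [← card_image_of_injOn (hinj.mono (filter_subset _ _)), ← filter_image, himage]
  congr 1
  ext g
  simp

theorem sum_card_fiber_mul_card_fiber_eq (hcard : #A * #B = Fintype.card G - 1)
    (hAB : A * B = univ \ {1}) {φ : G →* Q} (hφ : Function.Surjective φ) (x : Q) :
    ∑ y, (#{g ∈ A | φ g = y} * #{g ∈ B | φ g = y⁻¹ * x} : ℤ)
      = #{g | φ g = 1} - if x = 1 then 1 else 0 := by
  have herase : ({g | g ≠ 1 ∧ φ g = x} : Finset G) = ({g | φ g = x} : Finset G).erase 1 := by
    ext g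
    simp
  have hfiber : #{g | φ g = x} = #{g | φ g = 1} :=
    MonoidHom.card_fiber_eq_of_mem_range φ (hφ x) (hφ 1)
  have hone : (1 : G) ∈ ({g | φ g = x} : Finset G) ↔ x = 1 := by simp [eq_comm]
  have h := sum_card_fiber_mul_card_fiber_s13 φ A B x
  rw [card_filter_product_mul hcard hAB (φ · = x), herase, card_erase_eq_ite, hfiber] at h
  have h1 : 1 ≤ #{g | φ g = 1} := card_pos.mpr ⟨1, by simp⟩
  simp only [hone] at h
  by_cases hx : x = 1 <;> simp only [hx, if_true, if_false] at h ⊢ <;>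
    zify [h1] at h <;> exact h

end NearFactorization

theorem eq_eleven_or_eq_thirteen_of_mul_eq {m n : ℕ} (h : m * n = 143) (hm : 1 < m) (hn : 1 < n) :
    m = 11 ∨ m = 13 := by
  have hdiv : m ∈ Nat.divisors 143 := Nat.mem_divisors.mpr ⟨⟨n, h.symm⟩, by norm_num⟩
  rw [show Nat.divisors 143 = {1, 11, 13, 143} by decide] at hdiv
  simp only [mem_insert, mem_singleton] at hdiv
  rcases hdiv with rfl | rfl | rfl | rfl <;> omega

theorem three_mul_sum_le_sum_sq_add {ι : Type*} (s : Finset ι) (n : ι → ℕ) :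
    3 * ∑ i ∈ s, n i ≤ ∑ i ∈ s, n i ^ 2 + 2 * #s := by
  have key (m : ℕ) : 3 * m ≤ m ^ 2 + 2 := by
    rcases Nat.lt_or_ge m 2 with hm | hm
    · interval_cases m <;> norm_num
    · nlinarith
  rw [mul_sum, card_eq_sum_ones, mul_sum, ← sum_add_distrib]
  exact sum_le_sum fun i _ => by simpa using key (n i)

theorem card_mul_sum_sq_card_fiber_add_one {G Q : Type*} [Group G] [Fintype G] [DecidableEq G]
    [CommGroup Q] [Fintype Q] [DecidableEq Q] {a b : ℤ} (hab : b ^ 2 + 4 * a ≤ 0)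
    {ψ : Q → Q → QuadraticAlgebra ℤ a b} (hψ : IsSelfDualPairing ψ) {A B : Finset G}
    (hcard : #A * #B = Fintype.card G - 1) (hAB : A * B = univ \ {1}) {φ : G →* Q}
    (hφ : Function.Surjective φ) :
    Fintype.card Q * ∑ y, #{g ∈ A | φ g = y} ^ 2 + 1 = #A ^ 2 + Fintype.card Q := by
  have h := hψ.card_mul_sum_sq_add_one hab (u := fun y => #{g ∈ A | φ g = y})
    (v := fun y => #{g ∈ B | φ g = y}) (sum_card_fiber_mul_card_fiber_eq hcard hAB hφ)
  have hsum : (#A : ℤ) = ∑ y, (#{g ∈ A | φ g = y} : ℤ) := by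
    exact_mod_cast card_eq_sum_card_fiberwise fun _ _ => mem_univ _
  rw [← hsum] at h
  exact_mod_cast h

theorem not_surjective_of_card_eq_nine {G Q : Type*} [Group G] [Fintype G] [DecidableEq G]
    [CommGroup Q] [Fintype Q] [DecidableEq Q] {a b : ℤ} (hab : b ^ 2 + 4 * a ≤ 0)
    {ψ : Q → Q → QuadraticAlgebra ℤ a b} (hψ : IsSelfDualPairing ψ) (hQ : Fintype.card Q = 9)
    {A B : Finset G} (hcard : #A * #B = Fintype.card G - 1) (hAB : A * B = univ \ {1})
    (hA : #A = 11 ∨ #A = 13) (φ : G →* Q) : ¬ Function.Surjective φ := by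
  intro hφ
  have h := card_mul_sum_sq_card_fiber_add_one hab hψ hcard hAB hφ
  rw [hQ] at h
  rcases hA with hA | hA <;> rw [hA] at h <;> omega

theorem not_surjective_of_card_eq_eight {G Q : Type*} [Group G] [Fintype G] [DecidableEq G]
    [CommGroup Q] [Fintype Q] [DecidableEq Q] {a b : ℤ} (hab : b ^ 2 + 4 * a ≤ 0)
    {ψ : Q → Q → QuadraticAlgebra ℤ a b} (hψ : IsSelfDualPairing ψ) (hQ : Fintype.card Q = 8)
    {A B : Finset G} (hcard : #A * #B = Fintype.card G - 1) (hAB : A * B = univ \ {1})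
    (hA : #A = 11 ∨ #A = 13) (φ : G →* Q) : ¬ Function.Surjective φ := by
  intro hφ
  have h := card_mul_sum_sq_card_fiber_add_one hab hψ hcard hAB hφ
  have hle := three_mul_sum_le_sum_sq_add univ fun y => #{g ∈ A | φ g = y}
  rw [← card_eq_sum_card_fiberwise fun _ _ => mem_univ _, card_univ] at hle
  rw [hQ] at h hle
  rcases hA with hA | hA <;> rw [hA] at h hle <;> omega

section Surjections

variable {ι : Type*} [DecidableEq ι]

theorem Pi.surjective_evalMonoidHom_prod {M : ι → Type*} [∀ i, Monoid (M i)] {i j : ι}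
    (hij : i ≠ j) :
    Function.Surjective ((Pi.evalMonoidHom M i).prod (Pi.evalMonoidHom M j)) :=
  fun x => ⟨Pi.mulSingle i x.1 * Pi.mulSingle j x.2, by simp [hij, hij.symm]⟩

theorem Pi.surjective_evalMonoidHom_prod_prod {M : ι → Type*} [∀ i, Monoid (M i)] {i j k : ι}
    (hij : i ≠ j) (hik : i ≠ k) (hjk : j ≠ k) :
    Function.Surjective ((Pi.evalMonoidHom M i).prod
      ((Pi.evalMonoidHom M j).prod (Pi.evalMonoidHom M k))) :=
  fun x => ⟨Pi.mulSingle i x.1 * Pi.mulSingle j x.2.1 * Pi.mulSingle k x.2.2, by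
    simp [hij, hik, hjk, hij.symm, hik.symm, hjk.symm]⟩

variable {n : ι → ℕ}

theorem exists_surjective_pi_zmod_prod {i j : ι} (hij : i ≠ j) {p q : ℕ} (hp : p ∣ n i)
    (hq : q ∣ n j) :
    ∃ f : (∀ l, Multiplicative (ZMod (n l))) →* Multiplicative (ZMod p) × Multiplicative (ZMod q),
      Function.Surjective f :=
  ⟨((ZMod.castHom hp _).toAddMonoidHom.toMultiplicative.prodMap
      (ZMod.castHom hq _).toAddMonoidHom.toMultiplicative).comp
      ((Pi.evalMonoidHom _ i).prod (Pi.evalMonoidHom _ j)),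
    ((ZMod.castHom_surjective hp).prodMap (ZMod.castHom_surjective hq)).comp
      (Pi.surjective_evalMonoidHom_prod hij)⟩

theorem exists_surjective_pi_zmod_two_prod {i j k : ι} (hij : i ≠ j) (hik : i ≠ k) (hjk : j ≠ k)
    (hi : 2 ∣ n i) (hj : 2 ∣ n j) (hk : 2 ∣ n k) :
    ∃ f : (∀ l, Multiplicative (ZMod (n l))) →*
      Multiplicative (ZMod 2) × Multiplicative (ZMod 2) × Multiplicative (ZMod 2),
      Function.Surjective f :=
  ⟨((ZMod.castHom hi _).toAddMonoidHom.toMultiplicative.prodMap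
      ((ZMod.castHom hj _).toAddMonoidHom.toMultiplicative.prodMap
        (ZMod.castHom hk _).toAddMonoidHom.toMultiplicative)).comp
      ((Pi.evalMonoidHom _ i).prod ((Pi.evalMonoidHom _ j).prod (Pi.evalMonoidHom _ k))),
    ((ZMod.castHom_surjective hi).prodMap
      ((ZMod.castHom_surjective hj).prodMap (ZMod.castHom_surjective hk))).comp
      (Pi.surjective_evalMonoidHom_prod_prod hij hik hjk)⟩

end Surjections

theorem exists_even_ne_of_prod_eq_144 {ι : Type*} [Fintype ι] [DecidableEq ι] {n : ι → ℕ}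
    (hprod : ∏ i, n i = 144) {i j : ι} (hij : i ≠ j) (hi : n i % 4 = 2) (hj : n j % 4 = 2) :
    ∃ k, i ≠ k ∧ j ≠ k ∧ 2 ∣ n k := by
  have hsplit : n i * n j * ∏ k ∈ (univ.erase i).erase j, n k = 144 := by
    rw [mul_assoc, mul_prod_erase _ n (mem_erase.mpr ⟨hij.symm, mem_univ j⟩),
      mul_prod_erase _ n (mem_univ i), hprod]
  have heven : 2 ∣ ∏ k ∈ (univ.erase i).erase j, n k := by
    by_contra hodd
    obtain ⟨a, ha⟩ : ∃ a, n i = 4 * a + 2 := ⟨n i / 4, by omega⟩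
    obtain ⟨b, hb⟩ : ∃ b, n j = 4 * b + 2 := ⟨n j / 4, by omega⟩
    have : Odd ((2 * a + 1) * (2 * b + 1) * ∏ k ∈ (univ.erase i).erase j, n k) :=
      ((odd_two_mul_add_one a).mul (odd_two_mul_add_one b)).mul (Nat.odd_iff.mpr (by omega))
    obtain ⟨c, hc⟩ := this
    have h4 : 4 * (2 * c + 1) = 144 := by rw [← hc, ← hsplit, ha, hb]; ring
    omega
  obtain ⟨k, hk, h2k⟩ := Nat.prime_two.prime.exists_mem_finset_dvd heven
  simp only [mem_erase] at hk
  exact ⟨k, hk.2.1.symm, hk.1.symm, h2k⟩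

theorem exists_ne_dvd_of_prod_eq_144 {ι : Type*} [Fintype ι] [DecidableEq ι] {n : ι → ℕ}
    (hprod : ∏ i, n i = 144) (hcop : ¬ Pairwise fun i j => (n i).Coprime (n j)) :
    (∃ i j, i ≠ j ∧ 3 ∣ n i ∧ 3 ∣ n j) ∨ (∃ i j, i ≠ j ∧ 4 ∣ n i ∧ 2 ∣ n j) ∨
      (∃ i j k, i ≠ j ∧ i ≠ k ∧ j ≠ k ∧ 2 ∣ n i ∧ 2 ∣ n j ∧ 2 ∣ n k) := by
  obtain ⟨i, j, hij, hij'⟩ : ∃ i j, i ≠ j ∧ ¬ (n i).Coprime (n j) := by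
    simpa [Pairwise] using hcop
  obtain ⟨ℓ, hℓ, hℓi, hℓj⟩ := Nat.Prime.not_coprime_iff_dvd.mp hij'
  have hℓ144 : ℓ ∣ 2 ^ 4 * 3 ^ 2 :=
    hℓi.trans ((dvd_prod_of_mem n (mem_univ i)).trans (by rw [hprod]; norm_num))
  rcases (Nat.Prime.dvd_mul hℓ).mp hℓ144 with h2 | h3
  · obtain rfl := (Nat.prime_dvd_prime_iff_eq hℓ Nat.prime_two).mp (hℓ.dvd_of_dvd_pow h2)
    by_cases h4i : 4 ∣ n i
    · exact Or.inr (Or.inl ⟨i, j, hij, h4i, hℓj⟩)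
    by_cases h4j : 4 ∣ n j
    · exact Or.inr (Or.inl ⟨j, i, hij.symm, h4j, hℓi⟩)
    obtain ⟨k, hik, hjk, h2k⟩ := exists_even_ne_of_prod_eq_144 hprod hij (by omega) (by omega)
    by_cases h4k : 4 ∣ n k
    · exact Or.inr (Or.inl ⟨k, i, hik.symm, h4k, hℓi⟩)
    · exact Or.inr (Or.inr ⟨i, j, k, hij, hik, hjk, hℓi, hℓj, h2k⟩)
  · obtain rfl := (Nat.prime_dvd_prime_iff_eq hℓ Nat.prime_three).mp (hℓ.dvd_of_dvd_pow h3)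
    exact Or.inl ⟨i, j, hij, hℓi, hℓj⟩


theorem exists_surjective_of_not_isCyclic {G : Type*} [CommGroup G] [Finite G]
    (hcard : Nat.card G = 144) (hnc : ¬ IsCyclic G) :
    (∃ f : G →* Multiplicative (ZMod 3) × Multiplicative (ZMod 3), Function.Surjective f) ∨
    (∃ f : G →* Multiplicative (ZMod 4) × Multiplicative (ZMod 2), Function.Surjective f) ∨
    (∃ f : G →* Multiplicative (ZMod 2) × Multiplicative (ZMod 2) × Multiplicative (ZMod 2),
      Function.Surjective f) := by
  classical
  obtain ⟨ι, _, n, -, ⟨e⟩⟩ := CommGroup.equiv_prod_multiplicative_zmod_of_finite G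
  have hprod : ∏ i, n i = 144 := by
    rw [← hcard, Nat.card_congr e.toEquiv, Nat.card_pi]
    simp only [Nat.card_congr Multiplicative.toAdd, Nat.card_zmod]
  have hcop : ¬ Pairwise fun i j => (n i).Coprime (n j) := fun hcop =>
    let e' : Multiplicative (ZMod (∏ i, n i)) ≃* G :=
      ((AddEquiv.toMultiplicative (ZMod.prodEquivPi n hcop).toAddEquiv).trans
        (MulEquiv.piMultiplicative _)).trans e.symm
    hnc (isCyclic_of_surjective e' e'.surjective)
  rcases exists_ne_dvd_of_prod_eq_144 hprod hcop with
    ⟨i, j, hij, hi, hj⟩ | ⟨i, j, hij, hi, hj⟩ | ⟨i, j, k, hij, hik, hjk, hi, hj, hk⟩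
  · obtain ⟨f, hf⟩ := exists_surjective_pi_zmod_prod hij hi hj
    exact Or.inl ⟨f.comp e.toMonoidHom, hf.comp e.surjective⟩
  · obtain ⟨f, hf⟩ := exists_surjective_pi_zmod_prod hij hi hj
    exact Or.inr (Or.inl ⟨f.comp e.toMonoidHom, hf.comp e.surjective⟩)
  · obtain ⟨f, hf⟩ := exists_surjective_pi_zmod_two_prod hij hik hjk hi hj hk
    exact Or.inr (Or.inr ⟨f.comp e.toMonoidHom, hf.comp e.surjective⟩)

theorem no_near_factorization_order_144 {G : Type*} [CommGroup G] [Fintype G]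
    [DecidableEq G] (hcard : Fintype.card G = 144) (hnc : ¬ IsCyclic G) :
    ¬ ∃ A B : Finset G, IsNontrivialNearFactorization A B := by
  rintro ⟨A, B, hcardAB, hAB, hA, hB⟩
  have hA' : #A = 11 ∨ #A = 13 :=
    eq_eleven_or_eq_thirteen_of_mul_eq (by rw [hcardAB, hcard]) hA hB
  rcases exists_surjective_of_not_isCyclic (by rw [Nat.card_eq_fintype_card, hcard]) hnc with
    ⟨φ, hφ⟩ | ⟨φ, hφ⟩ | ⟨φ, hφ⟩
  · exact not_surjective_of_card_eq_nine (by norm_num) isSelfDualPairing_eisensteinPairing rfl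
      hcardAB hAB hA' φ hφ
  · exact not_surjective_of_card_eq_eight (by norm_num) isSelfDualPairing_gaussianPairing rfl
      hcardAB hAB hA' φ hφ
  · exact not_surjective_of_card_eq_eight (by norm_num) isSelfDualPairing_signPairing rfl
      hcardAB hAB hA' φ hφ
end

section
/- Let G be a finite group of order n and let ℓ ≥ 1 and m ≥ 3 be integers. Then there does not exist an (n, m, ℓ; 1)-strong circular external difference family in G. -/
/-!
Let `M_j` be the matrix of left multiplication by `A_j` on `ℚ[G]`. The λ = 1 condition says
`M_{j+1} M_jᵀ = J - I`, which is invertible as soon as `|G| ≥ 2`. Transposing the relation for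
`j = 0` gives `M_0 M_1ᵀ = J - I = M_2 M_1ᵀ`; cancelling the invertible `M_1ᵀ` yields `A_0 = A_2`,
although `A_0` and `A_2` are disjoint and nonempty (as `m ≥ 3`, they are different members).
-/

open Finset Matrix

/-- `A` is an `(n, m, ℓ; λ)`-strong circular external difference family (SCEDF) in the
finite group `G` of order `n`: the sets `A 0, …, A (m-1)` (indexed cyclically by `ZMod m`)
are pairwise disjoint `ℓ`-element subsets of `G`, and for every `j` and every `g ≠ 1`,
the number of pairs `(y, x) ∈ A (j+1) × A j` with `y * x⁻¹ = g` equals `λ`. -/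
def IsSCEDF {G : Type*} [Group G] [Fintype G] [DecidableEq G]
    (n m ℓ lam : ℕ) (A : ZMod m → Finset G) : Prop :=
  Fintype.card G = n ∧
  (∀ i j : ZMod m, i ≠ j → Disjoint (A i) (A j)) ∧
  (∀ j : ZMod m, (A j).card = ℓ) ∧
  (∀ j : ZMod m, ∀ g : G, g ≠ 1 →
    (((A (j + 1)) ×ˢ (A j)).filter (fun p => p.1 * p.2⁻¹ = g)).card = lam)

namespace Matrix

variable {ι K : Type*} [Fintype ι]

lemma of_one_mul_of_one [NonAssocSemiring K] :
    (of 1 : Matrix ι ι K) * of 1 = (Fintype.card ι : K) • of 1 := by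
  ext; simp [mul_apply]

lemma isUnit_of_one_sub_one [DecidableEq ι] [Field K] (h : (Fintype.card ι : K) ≠ 1) :
    IsUnit ((of 1 : Matrix ι ι K) - 1) := by
  set c : K := ((Fintype.card ι : K) - 1)⁻¹
  have hc : c * (Fintype.card ι - 1) = 1 := inv_mul_cancel₀ (sub_ne_zero.mpr h)
  refine IsUnit.of_mul_eq_one (c • of 1 - 1) ?_
  rw [mul_sub, sub_mul, sub_mul, mul_smul_comm, of_one_mul_of_one, smul_smul, one_mul, mul_one,
    mul_one]
  linear_combination (norm := module) hc • (of 1 : Matrix ι ι K)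

lemma eq_of_mul_eq_of_isUnit [DecidableEq ι] [CommRing K] {X X' Y N : Matrix ι ι K}
    (hX : X * Y = N) (hX' : X' * Y = N) (hN : IsUnit N) : X = X' :=
  (isUnit_of_mul_isUnit_right (hX ▸ hN)).mul_left_injective (hX.trans hX'.symm)

end Matrix

namespace Finset

variable {G R : Type*} [Group G] [DecidableEq G]

/-- The matrix of left multiplication by `∑ s ∈ S, s` on the group algebra `R[G]`. -/
def devMatrix [Zero R] [One R] (S : Finset G) : Matrix G G R :=
  of fun g h => if g * h⁻¹ ∈ S then 1 else 0

lemma devMatrix_injective [Zero R] [One R] [NeZero (1 : R)] :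
    Function.Injective (devMatrix : Finset G → Matrix G G R) := by
  intro S T hST
  ext g
  have := congrFun (congrFun hST g) 1
  simp only [devMatrix, of_apply, inv_one, mul_one] at this
  split_ifs at this <;> simp_all

lemma card_filter_mul_inv_mem_and_mul_inv_mem [Fintype G] (B C : Finset G) (g h : G) :
    #{k | g * k⁻¹ ∈ B ∧ h * k⁻¹ ∈ C} = #{p ∈ B ×ˢ C | p.1 * p.2⁻¹ = g * h⁻¹} := by
  have hx {y x : G} (hyx : y * x⁻¹ = g * h⁻¹) : h * (g⁻¹ * y) = x := by
    rw [mul_inv_eq_iff_eq_mul.mp hyx]; group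
  refine card_nbij' (fun k => (g * k⁻¹, h * k⁻¹)) (fun p => p.1⁻¹ * g) ?_ ?_ ?_ ?_
  · intro k hk
    simp_all
  · rintro ⟨y, x⟩ hp
    simp only [coe_filter, mem_product, Set.mem_ofPred_eq] at hp
    simp [hx hp.2, hp.1]
  · intro k _
    simp
  · rintro ⟨y, x⟩ hp
    simp only [coe_filter, mem_product, Set.mem_ofPred_eq] at hp
    simp [hx hp.2]

lemma devMatrix_mul_transpose_apply [Fintype G] [NonAssocSemiring R] (B C : Finset G) (g h : G) :
    (B.devMatrix * C.devMatrixᵀ : Matrix G G R) g h =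
      #{p ∈ B ×ˢ C | p.1 * p.2⁻¹ = g * h⁻¹} := by
  simp only [devMatrix, mul_apply, transpose_apply, of_apply, ite_zero_mul_ite_zero, mul_one]
  rw [sum_boole, card_filter_mul_inv_mem_and_mul_inv_mem]

lemma devMatrix_mul_transpose_eq_smul [Fintype G] [NonAssocRing R] {B C : Finset G} {lam : ℕ}
    (hBC : Disjoint B C) (hdiff : ∀ g ≠ 1, #{p ∈ B ×ˢ C | p.1 * p.2⁻¹ = g} = lam) :
    B.devMatrix * C.devMatrixᵀ = (lam : R) • ((of 1 : Matrix G G R) - 1) := by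
  ext g h
  rw [devMatrix_mul_transpose_apply]
  by_cases hgh : g = h
  · subst hgh
    have hempty : {p ∈ B ×ˢ C | p.1 * p.2⁻¹ = 1} = ∅ := by
      simp only [filter_eq_empty_iff, mem_product, mul_inv_eq_one, Prod.forall]
      rintro y x ⟨hy, hx⟩ rfl
      exact disjoint_left.mp hBC hy hx
    simp [hempty]
  · rw [hdiff _ (mul_inv_eq_one.not.mpr hgh)]
    simp [Matrix.sub_apply, one_apply_ne hgh]

end Finset

lemma ZMod.natCast_ne_zero_of_lt {m k : ℕ} (hk : 0 < k) (hkm : k < m) : (k : ZMod m) ≠ 0 := by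
  rw [Ne, ZMod.natCast_eq_zero_iff]
  exact Nat.not_dvd_of_pos_of_lt hk hkm

theorem no_scedf_lambda_one_general {G : Type*} [Group G] [Fintype G] [DecidableEq G]
    (n m ℓ : ℕ) (hl : 1 ≤ ℓ) (hm : 3 ≤ m) :
    ¬ ∃ A : ZMod m → Finset G, IsSCEDF n m ℓ 1 A := by
  rintro ⟨A, -, hdisj, hsize, hdiff⟩
  have h01 : (0 : ZMod m) ≠ 1 := by
    exact_mod_cast (ZMod.natCast_ne_zero_of_lt (m := m) one_pos (by omega)).symm
  have h02 : (0 : ZMod m) ≠ 2 := by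
    exact_mod_cast (ZMod.natCast_ne_zero_of_lt (m := m) two_pos (by omega)).symm
  have hA (j : ZMod m) : (A j).Nonempty := card_pos.mp (by have := hsize j; omega)
  set N : Matrix G G ℚ := of 1 - 1
  have hdev (j : ZMod m) : (A (j + 1)).devMatrix * (A j).devMatrixᵀ = N := by
    simpa [N] using devMatrix_mul_transpose_eq_smul (R := ℚ)
      (hdisj _ _ (by simpa using h01.symm)) (hdiff j)
  have hN : IsUnit N := by
    obtain ⟨a, ha⟩ := hA 0
    obtain ⟨b, hb⟩ := hA 1
    have hab : a ≠ b := fun h => disjoint_left.mp (hdisj 0 1 h01) ha (h ▸ hb)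
    exact isUnit_of_one_sub_one (by exact_mod_cast (Fintype.one_lt_card_iff.mpr ⟨a, b, hab⟩).ne')
  have hNt : Nᵀ = N := by rw [transpose_sub, transpose_one]; rfl
  have h0 : (A 0).devMatrix * (A 1).devMatrixᵀ = N := by
    have h := hdev 0
    rw [zero_add] at h
    rw [← transpose_transpose (A 0).devMatrix, ← transpose_mul, h, hNt]
  have h2 : (A 2).devMatrix * (A 1).devMatrixᵀ = N := by
    simpa [one_add_one_eq_two] using hdev 1
  have hA02 : A 0 = A 2 := devMatrix_injective (eq_of_mul_eq_of_isUnit h0 h2 hN)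
  exact (hA 2).ne_empty (disjoint_self_iff_empty _ |>.mp (hA02 ▸ hdisj 0 2 h02))

theorem no_scedf_lambda_one {G : Type*} [Group G] [Fintype G] [DecidableEq G]
    (n m ℓ : ℕ) (hn : Fintype.card G = n) (hl : 1 ≤ ℓ) (hm : 3 ≤ m) :
    ¬ ∃ A : ZMod m → Finset G, IsSCEDF n m ℓ 1 A :=
  no_scedf_lambda_one_general n m ℓ hl hm
end

section
/- Let G be a finite group of order n and let ℓ ≥ 1, m ≥ 3 and λ ≥ 1 be integers. Then there does not exist an (n, m, ℓ; λ)-strong circular external difference family in G. -/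
open Finset Matrix

theorem no_scedf_lambda_ge_one {G : Type*} [Group G] [Fintype G] [DecidableEq G]
    (n m ℓ lam : ℕ) (hn : Fintype.card G = n) (hl : 1 ≤ ℓ) (hm : 3 ≤ m) (hlam : 1 ≤ lam) :
    ¬ ∃ A : ZMod m → Finset G, IsSCEDF n m ℓ lam A := by
  rintro ⟨A, hcard, hdisj, hsize, hcount⟩
  -- index facts in ZMod m
  have h10 : (1 : ZMod m) ≠ 0 := by
    intro h
    have : m ∣ 1 := by
      have := (ZMod.natCast_eq_zero_iff 1 m).mp (by exact_mod_cast h)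
      exact this
    have := Nat.le_of_dvd (by norm_num) this
    omega
  have h20 : (2 : ZMod m) ≠ 0 := by
    intro h
    have : m ∣ 2 := by
      have := (ZMod.natCast_eq_zero_iff 2 m).mp (by exact_mod_cast h)
      exact this
    have := Nat.le_of_dvd (by norm_num) this
    omega
  have hsucc : ∀ j : ZMod m, j + 1 ≠ j := by
    intro j h
    apply h10
    have : j + 1 = j + 0 := by simpa using h
    exact add_left_cancel this
  -- n ≥ 2
  have hA0ne : (A 0).Nonempty := by
    rw [← Finset.card_pos, hsize]; omega
  have hn2 : 2 ≤ n := by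
    have hd : Disjoint (A 0) (A 1) := hdisj 0 1 (fun h => h10 h.symm)
    have h1 : (A 0 ∪ A 1).card ≤ Fintype.card G := by
      rw [← Finset.card_univ]
      exact Finset.card_le_card (Finset.subset_univ _)
    rw [Finset.card_union_of_disjoint hd, hsize, hsize, hcard] at h1
    omega
  -- the circulant matrices
  set M : ZMod m → Matrix G G ℚ :=
    fun j => Matrix.of (fun g h => if g * h⁻¹ ∈ A j then (1 : ℚ) else 0) with hM
  set E : Matrix G G ℚ :=
    Matrix.of (fun g h => if g = h then (0 : ℚ) else (lam : ℚ)) with hE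
  have key : ∀ j : ZMod m, M (j + 1) * (M j)ᵀ = E := by
    intro j
    ext g h
    rw [Matrix.mul_apply]
    simp only [hM, hE, Matrix.transpose_apply, Matrix.of_apply]
    have hstep : ∀ k : G,
        (if g * k⁻¹ ∈ A (j + 1) then (1 : ℚ) else 0) *
          (if h * k⁻¹ ∈ A j then (1 : ℚ) else 0) =
        if g * k⁻¹ ∈ A (j + 1) ∧ h * k⁻¹ ∈ A j then (1 : ℚ) else 0 := by
      intro k
      by_cases h1 : g * k⁻¹ ∈ A (j + 1) <;> by_cases h2 : h * k⁻¹ ∈ A j <;>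
        simp [h1, h2]
    rw [Finset.sum_congr rfl (fun k _ => hstep k), Finset.sum_boole]
    by_cases hgh : g = h
    · subst hgh
      rw [if_pos rfl]
      have hempty : (Finset.univ.filter
          (fun k : G => g * k⁻¹ ∈ A (j + 1) ∧ g * k⁻¹ ∈ A j)) = ∅ := by
        rw [Finset.filter_eq_empty_iff]
        rintro k - ⟨hk1, hk2⟩
        exact (Finset.disjoint_left.mp (hdisj (j + 1) j (hsucc j)) hk1) hk2
      rw [hempty]
      simp
    · rw [if_neg hgh]
      have hne : g * h⁻¹ ≠ 1 := by
        intro hc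
        exact hgh (by rwa [mul_inv_eq_one] at hc)
      have hc := hcount j (g * h⁻¹) hne
      have hbij : (Finset.univ.filter
          (fun k : G => g * k⁻¹ ∈ A (j + 1) ∧ h * k⁻¹ ∈ A j)).card =
          (((A (j + 1)) ×ˢ (A j)).filter (fun p => p.1 * p.2⁻¹ = g * h⁻¹)).card := by
        refine Finset.card_bij' (fun k _ => (g * k⁻¹, h * k⁻¹))
          (fun p _ => p.1⁻¹ * g) ?_ ?_ ?_ ?_
        · intro k hk
          simp only [Finset.mem_filter, Finset.mem_univ, true_and] at hk
          simp only [Finset.mem_filter, Finset.mem_product]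
          refine ⟨⟨hk.1, hk.2⟩, ?_⟩
          group
        · intro p hp
          simp only [Finset.mem_filter, Finset.mem_product] at hp
          obtain ⟨⟨hp1, hp2⟩, hp3⟩ := hp
          simp only [Finset.mem_filter, Finset.mem_univ, true_and]
          constructor
          · have e1 : g * (p.1⁻¹ * g)⁻¹ = p.1 := by group
            rwa [e1]
          · have e2 : h * (p.1⁻¹ * g)⁻¹ = p.2 := by
              have e3 : p.1 = g * h⁻¹ * p.2 := by
                rw [← hp3]; group
              rw [e3]; group
            rwa [e2]
        · intro k hk
          group
        · intro p hp
          simp only [Finset.mem_filter, Finset.mem_product] at hp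
          obtain ⟨⟨hp1, hp2⟩, hp3⟩ := hp
          have e1 : g * (p.1⁻¹ * g)⁻¹ = p.1 := by group
          have e2 : h * (p.1⁻¹ * g)⁻¹ = p.2 := by
            have e3 : p.1 = g * h⁻¹ * p.2 := by
              rw [← hp3]; group
            rw [e3]; group
          exact Prod.ext e1 e2
      rw [hbij, hc]
  -- E is symmetric, so also M 0 * (M 1)ᵀ = E
  have hEsymm : Eᵀ = E := by
    ext g h
    simp only [hE, Matrix.transpose_apply, Matrix.of_apply]
    by_cases hgh : g = h
    · simp [hgh]
    · simp [hgh, Ne.symm hgh]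
  have key2 : M 0 * (M 1)ᵀ = E := by
    have h0 : M 1 * (M 0)ᵀ = E := by
      have := key 0
      rwa [zero_add] at this
    calc M 0 * (M 1)ᵀ = (M 1 * (M 0)ᵀ)ᵀ := by
          rw [Matrix.transpose_mul, Matrix.transpose_transpose]
      _ = Eᵀ := by rw [h0]
      _ = E := hEsymm
  -- an explicit left inverse of E
  have hlamQ : (lam : ℚ) ≠ 0 := Nat.cast_ne_zero.mpr (by omega)
  have hcQ : ((n : ℚ) - 1) ≠ 0 := by
    have : (2 : ℚ) ≤ (n : ℚ) := by exact_mod_cast hn2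
    linarith
  set Jm : Matrix G G ℚ := Matrix.of (fun _ _ => (1 : ℚ)) with hJm
  have hJJ : Jm * Jm = (n : ℚ) • Jm := by
    ext g h
    simp only [hJm, Matrix.mul_apply, Matrix.of_apply, Matrix.smul_apply,
      mul_one, Finset.sum_const, Finset.card_univ, hcard, smul_eq_mul]
    push_cast
    ring
  have hEJ : E = (lam : ℚ) • Jm - (lam : ℚ) • 1 := by
    ext g h
    by_cases hgh : g = h <;>
      simp [hE, hJm, Matrix.one_apply, hgh]
  set F : Matrix G G ℚ :=
    ((lam : ℚ)⁻¹ * ((n : ℚ) - 1)⁻¹) • Jm - (lam : ℚ)⁻¹ • 1 with hF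
  have hFE : F * E = 1 := by
    rw [hF, hEJ]
    simp only [sub_mul, mul_sub, Matrix.smul_mul, Matrix.mul_smul,
      Matrix.one_mul, Matrix.mul_one, hJJ, smul_smul]
    match_scalars <;> (field_simp; try ring)
  -- hence (M 1)ᵀ has a right inverse, namely F * M 2
  have h2eq : (2 : ZMod m) = 1 + 1 := by norm_num
  have hkey1 : M 2 * (M 1)ᵀ = E := by
    rw [h2eq]; exact key 1
  have hXR : (M 1)ᵀ * (F * M 2) = 1 := by
    rw [mul_eq_one_comm]
    rw [Matrix.mul_assoc, hkey1, hFE]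
  have hM20 : M 2 = M 0 := by
    calc M 2 = M 2 * ((M 1)ᵀ * (F * M 2)) := by rw [hXR, Matrix.mul_one]
      _ = (M 2 * (M 1)ᵀ) * (F * M 2) := by rw [Matrix.mul_assoc]
      _ = (M 0 * (M 1)ᵀ) * (F * M 2) := by rw [hkey1, key2]
      _ = M 0 * ((M 1)ᵀ * (F * M 2)) := by rw [Matrix.mul_assoc]
      _ = M 0 := by rw [hXR, Matrix.mul_one]
  have hA20 : A 2 = A 0 := by
    ext g
    have hgg := congrFun (congrFun hM20 g) 1
    simp only [hM, Matrix.of_apply, inv_one, mul_one] at hgg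
    by_cases h2' : g ∈ A (2 : ZMod m) <;> by_cases h0' : g ∈ A (0 : ZMod m) <;>
      simp [h2', h0'] at hgg ⊢
  have hd20 := hdisj 2 0 h20
  rw [hA20] at hd20
  have hempty : A 0 = ∅ := by
    have := disjoint_self.mp hd20
    simpa using this
  exact hA0ne.ne_empty hempty
end

section
/- Let G be a finite group of order at least 2, let λ ≥ 1 be an integer, and suppose (A, B) and (A, B′) are both near-factorizations of index λ of G. Then B = B′. -/
/-!
Identify a subset `S ⊆ G` with the element `Ŝ = ∑_{s ∈ S} s` of the group algebra `ℚ[G]`.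
The hypothesis says `Â B̂ = λ (Ĝ - 1)`, and `Â Ĝ = |A| Ĝ`, so
`Â (|A|⁻¹ Ĝ - λ⁻¹ B̂) = 1`.
As `ℚ[G]` is finite-dimensional, a right inverse is two-sided, so `Â` is a unit and can be
cancelled from `Â B̂ = Â B̂'`.
-/

open Finset

/-- `(A, B)` is a near-factorization of index `λ` of the finite group `G`: for every `g ∈ G`,
the number of pairs `(a, b) ∈ A × B` with `a * b = g` equals `λ` if `g ≠ e` and `0` if `g = e`. -/
def IsNearFactorizationIndex {G : Type*} [Group G] [Fintype G] [DecidableEq G]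
    (lam : ℕ) (A B : Finset G) : Prop :=
  ∀ g : G, ((A ×ˢ B).filter (fun p => p.1 * p.2 = g)).card = if g = 1 then 0 else lam

namespace Finset

variable {k G : Type*}

noncomputable def toMonoidAlgebra (k : Type*) [Semiring k] (S : Finset G) : MonoidAlgebra k G :=
  ∑ s ∈ S, MonoidAlgebra.single s 1

variable [Semiring k]

theorem coeff_toMonoidAlgebra [DecidableEq G] (S : Finset G) (g : G) :
    (S.toMonoidAlgebra k).coeff g = if g ∈ S then 1 else 0 := by
  simp [toMonoidAlgebra, MonoidAlgebra.coeff_sum, MonoidAlgebra.coeff_single,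
    Finsupp.single_apply]

theorem toMonoidAlgebra_injective [Nontrivial k] :
    Function.Injective (toMonoidAlgebra k : Finset G → MonoidAlgebra k G) := by
  classical
  intro S T hST
  ext g
  have := congr_arg (fun x => x.coeff g) hST
  simp only [coeff_toMonoidAlgebra] at this
  split_ifs at this <;> simp_all

theorem coeff_toMonoidAlgebra_mul [Mul G] [DecidableEq G] (A B : Finset G) (g : G) :
    (A.toMonoidAlgebra k * B.toMonoidAlgebra k).coeff g =
      ((A ×ˢ B).filter (fun p => p.1 * p.2 = g)).card := by
  simp only [toMonoidAlgebra, sum_mul_sum, MonoidAlgebra.single_mul_single, mul_one,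
    ← sum_product', MonoidAlgebra.coeff_sum, sum_apply', MonoidAlgebra.coeff_single,
    Finsupp.single_apply]
  rw [card_filter, Nat.cast_sum]
  simp

theorem toMonoidAlgebra_mul_univ [Group G] [Fintype G] (A : Finset G) :
    A.toMonoidAlgebra k * univ.toMonoidAlgebra k = (#A : k) • univ.toMonoidAlgebra k := by
  classical
  ext g
  rw [coeff_toMonoidAlgebra_mul, MonoidAlgebra.coeff_smul_apply, coeff_toMonoidAlgebra,
    if_pos (mem_univ g), smul_eq_mul, mul_one]
  congr 1
  refine card_nbij' Prod.fst (fun a => (a, a⁻¹ * g)) ?_ ?_ ?_ ?_ <;>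
    intro <;> simp +contextual [eq_comm]

end Finset

namespace IsNearFactorizationIndex

variable {G : Type*} [Group G] [Fintype G] [DecidableEq G] {lam : ℕ} {A B : Finset G}

theorem toMonoidAlgebra_mul {k : Type*} [Ring k] (h : IsNearFactorizationIndex lam A B) :
    A.toMonoidAlgebra k * B.toMonoidAlgebra k = (lam : k) • (univ.toMonoidAlgebra k - 1) := by
  ext g
  rw [coeff_toMonoidAlgebra_mul, h g, MonoidAlgebra.coeff_smul_apply, MonoidAlgebra.coeff_sub,
    Finsupp.sub_apply, coeff_toMonoidAlgebra, MonoidAlgebra.one_def, MonoidAlgebra.coeff_single,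
    Finsupp.single_apply]
  by_cases hg : g = 1 <;> simp [hg, eq_comm]

theorem nonempty_left [Nontrivial G] (hlam : lam ≠ 0) (h : IsNearFactorizationIndex lam A B) :
    A.Nonempty := by
  obtain ⟨g, hg⟩ := exists_ne (1 : G)
  have hcard := h g
  rw [if_neg hg] at hcard
  obtain ⟨p, hp⟩ := card_pos.mp (hcard ▸ Nat.pos_of_ne_zero hlam)
  exact ⟨p.1, (mem_product.mp (mem_filter.mp hp).1).1⟩

theorem isUnit_toMonoidAlgebra {k : Type*} [Field k] (h : IsNearFactorizationIndex lam A B)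
    (hA : (#A : k) ≠ 0) (hlam : (lam : k) ≠ 0) : IsUnit (A.toMonoidAlgebra k) := by
  -- Artinian rings are Dedekind-finite, so a right inverse suffices.
  have : IsArtinianRing (MonoidAlgebra k G) := IsArtinianRing.of_finite k _
  refine IsUnit.of_mul_eq_one
    ((#A : k)⁻¹ • univ.toMonoidAlgebra k - (lam : k)⁻¹ • B.toMonoidAlgebra k) ?_
  rw [mul_sub, mul_smul_comm, mul_smul_comm, toMonoidAlgebra_mul_univ, h.toMonoidAlgebra_mul,
    smul_smul, smul_smul, inv_mul_cancel₀ hA, inv_mul_cancel₀ hlam, one_smul, one_smul]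
  abel

end IsNearFactorizationIndex

theorem mate_unique_index_lambda {G : Type*} [Group G] [Fintype G] [DecidableEq G]
    (hG : 2 ≤ Fintype.card G) (lam : ℕ) (hlam : 1 ≤ lam) (A B B' : Finset G)
    (h : IsNearFactorizationIndex lam A B) (h' : IsNearFactorizationIndex lam A B') :
    B = B' := by
  have : Nontrivial G := Fintype.one_lt_card_iff_nontrivial.mp hG
  have hA : A.Nonempty := h.nonempty_left (by omega)
  have hunit : IsUnit (A.toMonoidAlgebra ℚ) :=
    h.isUnit_toMonoidAlgebra (by simp [hA.ne_empty]) (by simp; omega)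
  apply toMonoidAlgebra_injective (k := ℚ)
  exact hunit.mul_left_cancel (by rw [h.toMonoidAlgebra_mul, h'.toMonoidAlgebra_mul])
end

section
/- Let H be a finite abelian group of odd order t and let G = H × ℤ₂ × ℤ₂. Suppose (A, B) is a near-factorization of G with |A| = r and |B| = s, where r ≡ 1 (mod 4). For i, j ∈ {0, 1} let G_{i,j} = H × {i} × {j}, a_{i,j} = |A ∩ G_{i,j}| and b_{i,j} = |B ∩ G_{i,j}|. Then s ≡ 3 (mod 4), and there is exactly one pair (i₀, j₀) ∈ {0,1}² such that a_{i₀,j₀} = (r + 3)/4, while a_{i,j} = (r − 1)/4 for the other three pairs (i, j); moreover, for this same pair (i₀, j₀), b_{i₀,j₀} = (s − 3)/4, while b_{i,j} = (s + 1)/4 for the other three pairs (i, j). -/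
open Finset
open scoped Pointwise

lemma char_sum_eq {G : Type*} [AddCommGroup G] [Fintype G] [DecidableEq G]
    (A B : Finset G) (hsum : A + B = Finset.univ \ {0})
    (hcard : A.card * B.card = Fintype.card G - 1)
    (f : G → ℤ) (hf : ∀ x y, f (x + y) = f x * f y) (h0 : f 0 = 1)
    (htot : ∑ g, f g = 0) :
    (∑ a ∈ A, f a) * (∑ b ∈ B, f b) = -1 := by
  have hcard2 : (Finset.univ \ {0} : Finset G).card = Fintype.card G - 1 := by
    rw [Finset.card_sdiff_of_subset (by simp)]; simp
  have hinj : ∀ x ∈ A ×ˢ B, ∀ y ∈ A ×ˢ B,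
      (fun p : G × G => p.1 + p.2) x = (fun p : G × G => p.1 + p.2) y → x = y := by
    have : ((A ×ˢ B).image (fun p : G × G => p.1 + p.2)).card = (A ×ˢ B).card := by
      rw [← Finset.add_def, hsum, hcard2, Finset.card_product, hcard]
    exact fun x hx y hy h => Finset.card_image_iff.mp this hx hy h
  calc (∑ a ∈ A, f a) * (∑ b ∈ B, f b)
      = ∑ p ∈ A ×ˢ B, f (p.1 + p.2) := by
        rw [Finset.sum_mul_sum, Finset.sum_product]
        exact Finset.sum_congr rfl fun a _ => Finset.sum_congr rfl fun b _ => (hf a b).symm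
    _ = ∑ g ∈ (A ×ˢ B).image (fun p : G × G => p.1 + p.2), f g :=
        (Finset.sum_image hinj).symm
    _ = ∑ g ∈ Finset.univ \ {0}, f g := by rw [← Finset.add_def, hsum]
    _ = -1 := by
        rw [Finset.sum_sdiff_eq_sub (by simp)]
        simp [htot, h0]

lemma sum_decomp {H : Type*} [DecidableEq H] (S : Finset (H × ZMod 2 × ZMod 2))
    (f : ZMod 2 → ZMod 2 → ℤ) :
    ∑ x ∈ S, f x.2.1 x.2.2 =
      f 0 0 * (S.filter (fun x => x.2.1 = 0 ∧ x.2.2 = 0)).card +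
      f 0 1 * (S.filter (fun x => x.2.1 = 0 ∧ x.2.2 = 1)).card +
      f 1 0 * (S.filter (fun x => x.2.1 = 1 ∧ x.2.2 = 0)).card +
      f 1 1 * (S.filter (fun x => x.2.1 = 1 ∧ x.2.2 = 1)).card := by
  have hz : ∀ i : ZMod 2, i = 0 ∨ i = 1 := by decide
  have hpt : ∀ x : H × ZMod 2 × ZMod 2, f x.2.1 x.2.2 =
      f 0 0 * (if x.2.1 = 0 ∧ x.2.2 = 0 then (1:ℤ) else 0) +
      f 0 1 * (if x.2.1 = 0 ∧ x.2.2 = 1 then (1:ℤ) else 0) +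
      f 1 0 * (if x.2.1 = 1 ∧ x.2.2 = 0 then (1:ℤ) else 0) +
      f 1 1 * (if x.2.1 = 1 ∧ x.2.2 = 1 then (1:ℤ) else 0) := by
    rintro ⟨h, i, j⟩
    rcases hz i with rfl | rfl <;> rcases hz j with rfl | rfl <;>
      simp [show (0:ZMod 2) ≠ 1 by decide, show (1:ZMod 2) ≠ 0 by decide]
  rw [Finset.sum_congr rfl (fun x _ => hpt x)]
  simp only [Finset.sum_add_distrib, ← Finset.mul_sum, Finset.sum_boole]

set_option maxHeartbeats 1000000 in
lemma endgame_arith (a₀ a₁ a₂ a₃ b₀ b₁ b₂ b₃ r s : ℕ)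
    (hr4 : r % 4 = 1) (hs4 : s % 4 = 3)
    (hsa : (a₀:ℤ) + a₁ + a₂ + a₃ = r) (hsb : (b₀:ℤ) + b₁ + b₂ + b₃ = s)
    (h1 : ((a₀:ℤ) + a₁ - a₂ - a₃) * ((b₀:ℤ) + b₁ - b₂ - b₃) = -1)
    (h2 : ((a₀:ℤ) - a₁ + a₂ - a₃) * ((b₀:ℤ) - b₁ + b₂ - b₃) = -1)
    (h3 : ((a₀:ℤ) - a₁ - a₂ + a₃) * ((b₀:ℤ) - b₁ - b₂ + b₃) = -1) :
    (4*a₀ = r + 3 ∧ 4*b₀ + 3 = s ∧ 4*a₁ + 1 = r ∧ 4*b₁ = s + 1 ∧ 4*a₂ + 1 = r ∧ 4*b₂ = s + 1 ∧ 4*a₃ + 1 = r ∧ 4*b₃ = s + 1) ∨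
    (4*a₁ = r + 3 ∧ 4*b₁ + 3 = s ∧ 4*a₀ + 1 = r ∧ 4*b₀ = s + 1 ∧ 4*a₂ + 1 = r ∧ 4*b₂ = s + 1 ∧ 4*a₃ + 1 = r ∧ 4*b₃ = s + 1) ∨
    (4*a₂ = r + 3 ∧ 4*b₂ + 3 = s ∧ 4*a₀ + 1 = r ∧ 4*b₀ = s + 1 ∧ 4*a₁ + 1 = r ∧ 4*b₁ = s + 1 ∧ 4*a₃ + 1 = r ∧ 4*b₃ = s + 1) ∨
    (4*a₃ = r + 3 ∧ 4*b₃ + 3 = s ∧ 4*a₀ + 1 = r ∧ 4*b₀ = s + 1 ∧ 4*a₁ + 1 = r ∧ 4*b₁ = s + 1 ∧ 4*a₂ + 1 = r ∧ 4*b₂ = s + 1) := by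
  have key : ∀ x y : ℤ, x * y = -1 → (x = 1 ∧ y = -1) ∨ (x = -1 ∧ y = 1) := by
    intro x y h
    have h' : x * (-y) = 1 := by rw [mul_neg, h]; ring
    rcases Int.mul_eq_one_iff_eq_one_or_neg_one.mp h' with ⟨hx, hy⟩ | ⟨hx, hy⟩
    · left; constructor <;> omega
    · right; constructor <;> omega
  have k1 := key _ _ h1
  have k2 := key _ _ h2
  have k3 := key _ _ h3
  rcases k1 with ⟨e1,d1⟩|⟨e1,d1⟩ <;> rcases k2 with ⟨e2,d2⟩|⟨e2,d2⟩ <;> rcases k3 with ⟨e3,d3⟩|⟨e3,d3⟩ <;> omega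

set_option maxHeartbeats 1000000 in
theorem near_factorization_H_Z2_Z2_structure
    {H : Type*} [AddCommGroup H] [Fintype H] [DecidableEq H]
    (t : ℕ) (ht : Fintype.card H = t) (htodd : Odd t)
    (A B : Finset (H × ZMod 2 × ZMod 2)) (r s : ℕ)
    (hA : A.card = r) (hB : B.card = s)
    (hcard : A.card * B.card = Fintype.card (H × ZMod 2 × ZMod 2) - 1)
    (hsum : A + B = Finset.univ \ {0})
    (hr : r % 4 = 1) :
    s % 4 = 3 ∧
    ∃ i₀ j₀ : ZMod 2,
      (A.filter (fun x => x.2.1 = i₀ ∧ x.2.2 = j₀)).card = (r + 3) / 4 ∧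
      (B.filter (fun x => x.2.1 = i₀ ∧ x.2.2 = j₀)).card = (s - 3) / 4 ∧
      ∀ i j : ZMod 2, (i, j) ≠ (i₀, j₀) →
        (A.filter (fun x => x.2.1 = i ∧ x.2.2 = j)).card = (r - 1) / 4 ∧
        (B.filter (fun x => x.2.1 = i ∧ x.2.2 = j)).card = (s + 1) / 4 := by
  have hG : Fintype.card (H × ZMod 2 × ZMod 2) = 4 * t := by
    simp [Fintype.card_prod, ZMod.card, ht]; ring
  have ht1 : 1 ≤ t := by rcases htodd with ⟨k, hk⟩; omega
  have hrs : r * s = 4 * t - 1 := by rw [← hA, ← hB, hcard, hG]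
  have hs4 : s % 4 = 3 := by
    have h1 : (r * s) % 4 = 3 := by omega
    have h2 := Nat.mul_mod r s 4
    rw [hr] at h2
    omega
  have hz : ∀ i : ZMod 2, i = 0 ∨ i = 1 := by decide
  set c : ZMod 2 → ℤ := fun i => if i = 0 then 1 else -1 with hc
  have cmul : ∀ i j : ZMod 2, c (i + j) = c i * c j := by decide
  have csum : ∀ f : ZMod 2 × ZMod 2 → ℤ, (∑ p : ZMod 2 × ZMod 2, f p = 0) →
      ∑ x : H × ZMod 2 × ZMod 2, f x.2 = 0 := by
    intro f hf
    rw [Fintype.sum_prod_type]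
    simp [hf]
  have hadd : ∀ x y : H × ZMod 2 × ZMod 2,
      (x + y).2.1 = x.2.1 + y.2.1 ∧ (x + y).2.2 = x.2.2 + y.2.2 := by
    intro x y; exact ⟨rfl, rfl⟩
  have e1 := char_sum_eq A B hsum hcard (fun x => c x.2.1)
    (fun x y => by show c (x+y).2.1 = _; rw [(hadd x y).1, cmul]) (by simp [hc])
    (csum (fun p => c p.1) (by decide))
  have e2 := char_sum_eq A B hsum hcard (fun x => c x.2.2)
    (fun x y => by show c (x+y).2.2 = _; rw [(hadd x y).2, cmul]) (by simp [hc])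
    (csum (fun p => c p.2) (by decide))
  have e3 := char_sum_eq A B hsum hcard (fun x => c x.2.1 * c x.2.2)
    (fun x y => by
      show c (x+y).2.1 * c (x+y).2.2 = _
      rw [(hadd x y).1, (hadd x y).2, cmul, cmul]
      ring) (by simp [hc])
    (csum (fun p => c p.1 * c p.2) (by decide))
  -- decompositions
  have c0 : c 0 = 1 := by decide
  have c1 : c 1 = -1 := by decide
  have dA1 : (∑ x ∈ A, c x.2.1) =
      ((A.filter (fun x => x.2.1 = 0 ∧ x.2.2 = 0)).card : ℤ) +
       (A.filter (fun x => x.2.1 = 0 ∧ x.2.2 = 1)).card -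
       (A.filter (fun x => x.2.1 = 1 ∧ x.2.2 = 0)).card -
       (A.filter (fun x => x.2.1 = 1 ∧ x.2.2 = 1)).card := by
    have h := sum_decomp A (fun i _ => c i); rw [c0, c1] at h; rw [h]; ring
  have dA2 : (∑ x ∈ A, c x.2.2) =
      ((A.filter (fun x => x.2.1 = 0 ∧ x.2.2 = 0)).card : ℤ) -
       (A.filter (fun x => x.2.1 = 0 ∧ x.2.2 = 1)).card +
       (A.filter (fun x => x.2.1 = 1 ∧ x.2.2 = 0)).card -
       (A.filter (fun x => x.2.1 = 1 ∧ x.2.2 = 1)).card := by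
    have h := sum_decomp A (fun _ j => c j); rw [c0, c1] at h; rw [h]; ring
  have dA3 : (∑ x ∈ A, c x.2.1 * c x.2.2) =
      ((A.filter (fun x => x.2.1 = 0 ∧ x.2.2 = 0)).card : ℤ) -
       (A.filter (fun x => x.2.1 = 0 ∧ x.2.2 = 1)).card -
       (A.filter (fun x => x.2.1 = 1 ∧ x.2.2 = 0)).card +
       (A.filter (fun x => x.2.1 = 1 ∧ x.2.2 = 1)).card := by
    have h := sum_decomp A (fun i j => c i * c j); rw [c0, c1] at h; rw [h]; ring
  have dB1 : (∑ x ∈ B, c x.2.1) =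
      ((B.filter (fun x => x.2.1 = 0 ∧ x.2.2 = 0)).card : ℤ) +
       (B.filter (fun x => x.2.1 = 0 ∧ x.2.2 = 1)).card -
       (B.filter (fun x => x.2.1 = 1 ∧ x.2.2 = 0)).card -
       (B.filter (fun x => x.2.1 = 1 ∧ x.2.2 = 1)).card := by
    have h := sum_decomp B (fun i _ => c i); rw [c0, c1] at h; rw [h]; ring
  have dB2 : (∑ x ∈ B, c x.2.2) =
      ((B.filter (fun x => x.2.1 = 0 ∧ x.2.2 = 0)).card : ℤ) -
       (B.filter (fun x => x.2.1 = 0 ∧ x.2.2 = 1)).card +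
       (B.filter (fun x => x.2.1 = 1 ∧ x.2.2 = 0)).card -
       (B.filter (fun x => x.2.1 = 1 ∧ x.2.2 = 1)).card := by
    have h := sum_decomp B (fun _ j => c j); rw [c0, c1] at h; rw [h]; ring
  have dB3 : (∑ x ∈ B, c x.2.1 * c x.2.2) =
      ((B.filter (fun x => x.2.1 = 0 ∧ x.2.2 = 0)).card : ℤ) -
       (B.filter (fun x => x.2.1 = 0 ∧ x.2.2 = 1)).card -
       (B.filter (fun x => x.2.1 = 1 ∧ x.2.2 = 0)).card +
       (B.filter (fun x => x.2.1 = 1 ∧ x.2.2 = 1)).card := by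
    have h := sum_decomp B (fun i j => c i * c j); rw [c0, c1] at h; rw [h]; ring
  rw [dA1, dB1] at e1
  rw [dA2, dB2] at e2
  rw [dA3, dB3] at e3
  have hsa : ((A.filter (fun x => x.2.1 = 0 ∧ x.2.2 = 0)).card : ℤ) +
       (A.filter (fun x => x.2.1 = 0 ∧ x.2.2 = 1)).card +
       (A.filter (fun x => x.2.1 = 1 ∧ x.2.2 = 0)).card +
       (A.filter (fun x => x.2.1 = 1 ∧ x.2.2 = 1)).card = r := by
    have h := sum_decomp A (fun _ _ => (1:ℤ))
    simp only [one_mul, Finset.sum_const, nsmul_eq_mul, mul_one] at h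
    rw [hA] at h
    omega
  have hsb : ((B.filter (fun x => x.2.1 = 0 ∧ x.2.2 = 0)).card : ℤ) +
       (B.filter (fun x => x.2.1 = 0 ∧ x.2.2 = 1)).card +
       (B.filter (fun x => x.2.1 = 1 ∧ x.2.2 = 0)).card +
       (B.filter (fun x => x.2.1 = 1 ∧ x.2.2 = 1)).card = s := by
    have h := sum_decomp B (fun _ _ => (1:ℤ))
    simp only [one_mul, Finset.sum_const, nsmul_eq_mul, mul_one] at h
    rw [hB] at h
    omega
  have final := endgame_arith _ _ _ _ _ _ _ _ r s hr hs4 hsa hsb e1 e2 e3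
  refine ⟨hs4, ?_⟩
  have hne01 : (0 : ZMod 2) ≠ 1 := by decide
  have hne10 : (1 : ZMod 2) ≠ 0 := by decide
  rcases final with h | h | h | h
  · refine ⟨0, 0, by omega, by omega, ?_⟩
    intro i j hij
    rcases hz i with rfl | rfl <;> rcases hz j with rfl | rfl
    · exact absurd rfl hij
    · exact ⟨by omega, by omega⟩
    · exact ⟨by omega, by omega⟩
    · exact ⟨by omega, by omega⟩
  · refine ⟨0, 1, by omega, by omega, ?_⟩
    intro i j hij
    rcases hz i with rfl | rfl <;> rcases hz j with rfl | rfl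
    · exact ⟨by omega, by omega⟩
    · exact absurd rfl hij
    · exact ⟨by omega, by omega⟩
    · exact ⟨by omega, by omega⟩
  · refine ⟨1, 0, by omega, by omega, ?_⟩
    intro i j hij
    rcases hz i with rfl | rfl <;> rcases hz j with rfl | rfl
    · exact ⟨by omega, by omega⟩
    · exact ⟨by omega, by omega⟩
    · exact absurd rfl hij
    · exact ⟨by omega, by omega⟩
  · refine ⟨1, 1, by omega, by omega, ?_⟩
    intro i j hij
    rcases hz i with rfl | rfl <;> rcases hz j with rfl | rfl
    · exact ⟨by omega, by omega⟩
    · exact ⟨by omega, by omega⟩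
    · exact ⟨by omega, by omega⟩
    · exact absurd rfl hij
end

section
/- Let F be a finite field with q elements, where q ≡ 1 (mod 4). Let A be the set of nonzero quadratic residues (nonzero squares) of F and let B be the set of quadratic nonresidues (nonzero nonsquares) of F. Then |A| = |B| = (q − 1)/2 and (A, B) is a near-factorization of index (q − 1)/4 of the additive group of F: for every nonzero c ∈ F, the number of pairs (a, b) ∈ A × B with a + b = c equals (q − 1)/4, and no pair (a, b) ∈ A × B satisfies a + b = 0. -/
open Finset

/-!
Multiplication by a nonzero `r` maps the nonzero squares and the nonsquares of `F` to themselves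
when `r` is a square and swaps them otherwise. Hence `(a, b) ↦ (r a, r b)`, resp. `(r b, r a)`,
matches the representations `c = a + b` with `(a, b) ∈ A × B` with those of `r c`, so every
nonzero `c` has the same number `N` of representations. When `q ≡ 1 (mod 4)`, `-1` is a square,
so `a + b = 0` would force `b = -a` to be a square; counting all of `A × B` by the value of `a + b`
then gives `((q - 1) / 2)² = (q - 1) N`.
-/

section AddRepresentations

variable {G : Type*} [Add G] [DecidableEq G]

def addRepresentations (A B : Finset G) (c : G) : Finset (G × G) :=
  (A ×ˢ B).filter (fun p => p.1 + p.2 = c)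

@[simp]
lemma mem_addRepresentations {A B : Finset G} {c : G} {p : G × G} :
    p ∈ addRepresentations A B c ↔ p.1 ∈ A ∧ p.2 ∈ B ∧ p.1 + p.2 = c := by
  simp [addRepresentations, and_assoc]

lemma card_product_eq_sum_card_addRepresentations [Fintype G] (A B : Finset G) :
    #(A ×ˢ B) = ∑ c, #(addRepresentations A B c) :=
  card_eq_sum_card_fiberwise fun _ _ => mem_univ _

end AddRepresentations

namespace FiniteField

variable {F : Type*} [Field F] [Fintype F]

lemma ringChar_ne_two_of_odd_card (hF : Fintype.card F % 2 = 1) : ringChar F ≠ 2 :=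
  fun h => by rw [even_card_iff_char_two.mp h] at hF; exact zero_ne_one hF

variable [DecidableEq F]

variable (F) in
def nonzeroSquares : Finset F := univ.filter (fun a => a ≠ 0 ∧ IsSquare a)

variable (F) in
def nonsquares : Finset F := univ.filter (fun a => a ≠ 0 ∧ ¬ IsSquare a)

@[simp]
lemma mem_nonzeroSquares {a : F} : a ∈ nonzeroSquares F ↔ a ≠ 0 ∧ IsSquare a := by
  simp [nonzeroSquares]

@[simp]
lemma mem_nonsquares {a : F} : a ∈ nonsquares F ↔ ¬ IsSquare a := by
  simp only [nonsquares, mem_filter, mem_univ, true_and, and_iff_right_iff_imp]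
  rintro ha rfl
  exact ha IsSquare.zero

lemma card_nonzeroSquares_add_card_nonsquares :
    #(nonzeroSquares F) + #(nonsquares F) = Fintype.card F - 1 := by
  rw [nonzeroSquares, nonsquares, ← filter_filter, ← filter_filter,
    card_filter_add_card_filter_not, filter_ne', card_erase_of_mem (mem_univ _), card_univ]

lemma isSquare_mul_iff_of_ne_zero {r a : F} (hr : r ≠ 0) (ha : a ≠ 0) :
    IsSquare (r * a) ↔ (IsSquare r ↔ IsSquare a) := by
  rw [← quadraticChar_one_iff_isSquare (mul_ne_zero hr ha), map_mul,
    ← quadraticChar_one_iff_isSquare hr, ← quadraticChar_one_iff_isSquare ha]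
  rcases quadraticChar_dichotomy hr with h | h <;>
    rcases quadraticChar_dichotomy ha with h' | h' <;>
      simp [h, h']

lemma mul_mem_nonzeroSquares_iff_of_isSquare {r : F} (hr : r ≠ 0) (a : F) (hrs : IsSquare r) :
    r * a ∈ nonzeroSquares F ↔ a ∈ nonzeroSquares F := by
  rcases eq_or_ne a 0 with rfl | ha
  · simp
  · simp [hr, ha, isSquare_mul_iff_of_ne_zero hr ha, hrs]

lemma mul_mem_nonsquares_iff_of_isSquare {r : F} (hr : r ≠ 0) (a : F) (hrs : IsSquare r) :
    r * a ∈ nonsquares F ↔ a ∈ nonsquares F := by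
  rcases eq_or_ne a 0 with rfl | ha
  · simp
  · simp [isSquare_mul_iff_of_ne_zero hr ha, hrs]

lemma mul_mem_nonzeroSquares_iff_of_not_isSquare {r : F} (hr : r ≠ 0) (a : F)
    (hrs : ¬ IsSquare r) :
    r * a ∈ nonzeroSquares F ↔ a ∈ nonsquares F := by
  rcases eq_or_ne a 0 with rfl | ha
  · simp
  · simp [hr, ha, isSquare_mul_iff_of_ne_zero hr ha, hrs]

lemma mul_mem_nonsquares_iff_of_not_isSquare {r : F} (hr : r ≠ 0) (a : F) (hrs : ¬ IsSquare r) :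
    r * a ∈ nonsquares F ↔ a ∈ nonzeroSquares F := by
  rcases eq_or_ne a 0 with rfl | ha
  · simp
  · simp [ha, isSquare_mul_iff_of_ne_zero hr ha, hrs]

lemma card_nonzeroSquares_eq_card_nonsquares (hF : ringChar F ≠ 2) :
    #(nonzeroSquares F) = #(nonsquares F) := by
  obtain ⟨n, hn⟩ := exists_nonsquare hF
  have hn0 : n ≠ 0 := by rintro rfl; exact hn IsSquare.zero
  exact card_equiv (Equiv.mulLeft₀ n hn0) fun a =>
    (mul_mem_nonsquares_iff_of_not_isSquare hn0 a hn).symm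

lemma card_nonzeroSquares (hF : ringChar F ≠ 2) :
    #(nonzeroSquares F) = (Fintype.card F - 1) / 2 := by
  have := card_nonzeroSquares_add_card_nonsquares (F := F)
  have := card_nonzeroSquares_eq_card_nonsquares hF
  omega

lemma card_nonsquares (hF : ringChar F ≠ 2) :
    #(nonsquares F) = (Fintype.card F - 1) / 2 := by
  rw [← card_nonzeroSquares_eq_card_nonsquares hF, card_nonzeroSquares hF]

lemma card_addRepresentations_mul {r : F} (hr : r ≠ 0) (c : F) :
    #(addRepresentations (nonzeroSquares F) (nonsquares F) (r * c)) =
      #(addRepresentations (nonzeroSquares F) (nonsquares F) c) := by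
  symm
  let e := (Equiv.mulLeft₀ r hr).prodCongr (Equiv.mulLeft₀ r hr)
  by_cases hrs : IsSquare r
  · refine card_equiv e fun p => ?_
    simp [e, mul_mem_nonzeroSquares_iff_of_isSquare hr _ hrs,
      mul_mem_nonsquares_iff_of_isSquare hr _ hrs, ← mul_add, hr]
  · refine card_equiv (e.trans (Equiv.prodComm F F)) fun p => ?_
    simp [e, mul_mem_nonzeroSquares_iff_of_not_isSquare hr _ hrs,
      mul_mem_nonsquares_iff_of_not_isSquare hr _ hrs, ← mul_add, hr, add_comm]
    tauto

lemma addRepresentations_zero_eq_empty (hq : Fintype.card F % 4 = 1) :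
    addRepresentations (nonzeroSquares F) (nonsquares F) 0 = ∅ := by
  have hneg : IsSquare (-1 : F) := isSquare_neg_one_iff.mpr (by omega)
  refine eq_empty_of_forall_notMem fun ⟨a, b⟩ hab => ?_
  obtain ⟨ha, hb, hsum⟩ := mem_addRepresentations.mp hab
  have hba : b = -1 * a := by linear_combination hsum
  rw [hba, mul_mem_nonsquares_iff_of_isSquare (neg_ne_zero.mpr one_ne_zero) a hneg] at hb
  exact mem_nonsquares.mp hb (mem_nonzeroSquares.mp ha).2

lemma card_addRepresentations_of_ne_zero (hq : Fintype.card F % 4 = 1) {c : F} (hc : c ≠ 0) :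
    #(addRepresentations (nonzeroSquares F) (nonsquares F) c) = (Fintype.card F - 1) / 4 := by
  have hF : ringChar F ≠ 2 := ringChar_ne_two_of_odd_card (by omega)
  set N := #(addRepresentations (nonzeroSquares F) (nonsquares F) 1)
  have hconst : ∀ c : F, c ≠ 0 → #(addRepresentations (nonzeroSquares F) (nonsquares F) c) = N :=
    fun c hc => by simpa using card_addRepresentations_mul hc 1
  have hcount : #(nonzeroSquares F) * #(nonsquares F) = (Fintype.card F - 1) * N := by
    rw [← card_product, card_product_eq_sum_card_addRepresentations,
      ← add_sum_erase _ _ (mem_univ 0), addRepresentations_zero_eq_empty hq, card_empty, zero_add,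
      sum_congr rfl fun c hc => hconst c (ne_of_mem_erase hc), sum_const,
      card_erase_of_mem (mem_univ _), card_univ, smul_eq_mul]
  rw [card_nonzeroSquares hF, card_nonsquares hF] at hcount
  obtain ⟨k, hk⟩ : ∃ k, Fintype.card F = 4 * k + 1 := ⟨Fintype.card F / 4, by omega⟩
  have hk0 : 0 < k := by have := Fintype.one_lt_card (α := F); omega
  rw [hk, Nat.add_sub_cancel, show 4 * k / 2 = 2 * k by omega] at hcount
  rw [hconst c hc, hk, Nat.add_sub_cancel, Nat.mul_div_cancel_left _ four_pos]
  exact Nat.eq_of_mul_eq_mul_left (by omega : 0 < 4 * k) (by linarith)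

end FiniteField

theorem quadratic_residues_near_factorization
    {F : Type*} [Field F] [Fintype F] [DecidableEq F]
    (q : ℕ) (hq : Fintype.card F = q) (hq4 : q % 4 = 1) :
    letI A : Finset F := Finset.univ.filter (fun a => a ≠ 0 ∧ IsSquare a)
    letI B : Finset F := Finset.univ.filter (fun a => a ≠ 0 ∧ ¬ IsSquare a)
    A.card = (q - 1) / 2 ∧ B.card = (q - 1) / 2 ∧
    (∀ c : F, c ≠ 0 →
      ((A ×ˢ B).filter (fun p => p.1 + p.2 = c)).card = (q - 1) / 4) ∧
    ((A ×ˢ B).filter (fun p => p.1 + p.2 = 0)).card = 0 := by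
  subst hq
  have hF : ringChar F ≠ 2 := FiniteField.ringChar_ne_two_of_odd_card (by omega)
  exact ⟨FiniteField.card_nonzeroSquares hF, FiniteField.card_nonsquares hF,
    fun c hc => FiniteField.card_addRepresentations_of_ne_zero hq4 hc,
    by rw [card_eq_zero]; exact FiniteField.addRepresentations_zero_eq_empty hq4⟩
end
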